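/- arXiv:2505.07667 — 6 statements merged into one kernel-verified Lean document; each statement's English description precedes it below -/
import Mathlib

section
/- Let (X_i)_{i≥1} be independent, identically distributed random variables on a probability space (Ω,ℙ), each taking values in {-1,0,1}, and set p₊ = ℙ(X_i = 1), p₋ = ℙ(X_i = -1). Assume p₊ > p₋. Let Z_0 = 0 and Z_n = X_1 + ⋯ + X_n. Then ℙ(Z_n > 0 for every n ≥ 1) = p₊ − p₋. -/
open MeasureTheory ProbabilityTheory Filter
open scoped ENNReal Topology

lemma measAll {α : Type*} [Countable α] [MeasurableSpace α] [MeasurableSingletonClass α]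
    (s : Set α) : MeasurableSet s := s.to_countable.measurableSet

section Aux
set_option linter.unusedSectionVars false
variable {Ω : Type*} [MeasurableSpace Ω] (P : Measure Ω) [IsProbabilityMeasure P]
  (X : ℕ → Ω → ℤ)

lemma aux_single (hindep : iIndepFun X P)
    (hident : ∀ i j, IdentDistrib (X i) (X j) P P)
    (N : ℕ) (g : Fin N → ℕ) (hg : Function.Injective g) (f : Fin N → ℤ) :
    P {ω | ∀ i, X (g i) ω = f i} = ∏ i, P {ω | X 0 ω = f i} := by
  classical
  set sets : ℕ → Set ℤ := fun j => ⋂ i ∈ Finset.univ.filter (fun i => g i = j), ({f i} : Set ℤ)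
    with hsets
  have hsg : ∀ i : Fin N, sets (g i) = {f i} := by
    intro i
    simp only [hsets]
    ext x
    simp [hg.eq_iff]
  have hset : {ω | ∀ i, X (g i) ω = f i} = ⋂ j ∈ Finset.image g Finset.univ, X j ⁻¹' sets j := by
    ext ω
    simp only [Set.mem_setOf_eq, Set.mem_iInter, Finset.mem_image]
    constructor
    · rintro h j ⟨i, -, rfl⟩
      rw [hsg i]; exact h i
    · intro h i
      have := h (g i) ⟨i, Finset.mem_univ i, rfl⟩
      rwa [hsg i] at this
  rw [hset, hindep.measure_inter_preimage_eq_mul _ (fun i _ => measAll _)]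
  rw [Finset.prod_image (fun a _ b _ h => hg h)]
  apply Finset.prod_congr rfl
  intro i _
  rw [hsg i]
  have h2 : X (g i) ⁻¹' {f i} = {ω | X (g i) ω = f i} := by ext ω; simp
  rw [h2]
  have := (hident (g i) 0).measure_mem_eq (s := {f i}) (measAll _)
  exact this

lemma aux_tuple_law (hmeas : ∀ i, Measurable (X i))
    (hindep : iIndepFun X P)
    (hident : ∀ i j, IdentDistrib (X i) (X j) P P)
    (N : ℕ) (g : Fin N → ℕ) (hg : Function.Injective g) (S : Set (Fin N → ℤ)) :
    P {ω | (fun i => X (g i) ω) ∈ S} = ∑' f : S, ∏ i, P {ω | X 0 ω = (f : Fin N → ℤ) i} := by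
  classical
  have hdecomp : {ω | (fun i => X (g i) ω) ∈ S}
      = ⋃ f : S, {ω | ∀ i, X (g i) ω = (f : Fin N → ℤ) i} := by
    ext ω
    simp only [Set.mem_setOf_eq, Set.mem_iUnion]
    constructor
    · intro h
      exact ⟨⟨_, h⟩, fun i => rfl⟩
    · rintro ⟨f, hf⟩
      have : (fun i => X (g i) ω) = (f : Fin N → ℤ) := funext hf
      rw [this]; exact f.2
  rw [hdecomp, measure_iUnion]
  · exact tsum_congr fun f => aux_single P X hindep hident N g hg _
  · intro f f' hff
    simp only [Set.disjoint_left]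
    intro ω h1 h2
    exact hff (Subtype.ext (by ext i; rw [← h1 i, ← h2 i]))
  · intro f
    have : {ω | ∀ i, X (g i) ω = (f : Fin N → ℤ) i} = ⋂ i, X (g i) ⁻¹' {(f : Fin N → ℤ) i} := by
      ext ω; simp
    rw [this]
    exact MeasurableSet.iInter fun i => (hmeas (g i)) (measAll _)

lemma aux_tuple (hmeas : ∀ i, Measurable (X i))
    (hindep : iIndepFun X P)
    (hident : ∀ i j, IdentDistrib (X i) (X j) P P)
    (N : ℕ) (g₁ g₂ : Fin N → ℕ) (h₁ : Function.Injective g₁) (h₂ : Function.Injective g₂)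
    (S : Set (Fin N → ℤ)) :
    P {ω | (fun i => X (g₁ i) ω) ∈ S} = P {ω | (fun i => X (g₂ i) ω) ∈ S} := by
  rw [aux_tuple_law P X hmeas hindep hident N g₁ h₁ S,
      aux_tuple_law P X hmeas hindep hident N g₂ h₂ S]

lemma aux_split (hmeas : ∀ i, Measurable (X i))
    (hindep : iIndepFun X P)
    (m N : ℕ) (S : Set (Fin m → ℤ)) (T : Set (Fin N → ℤ)) :
    P ({ω | (fun i : Fin m => X i ω) ∈ S} ∩ {ω | (fun i : Fin N => X (m + i) ω) ∈ T})
      = P {ω | (fun i : Fin m => X i ω) ∈ S} * P {ω | (fun i : Fin N => X (m + i) ω) ∈ T} := by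
  classical
  have hd : Disjoint (Finset.range m) (Finset.Ico m (m + N)) := by
    simp only [Finset.disjoint_left, Finset.mem_range, Finset.mem_Ico]
    omega
  have hIF := hindep.indepFun_finset (Finset.range m) (Finset.Ico m (m + N)) hd hmeas
  set φ : (↥(Finset.range m) → ℤ) → (Fin m → ℤ) :=
    fun h i => h ⟨i.1, Finset.mem_range.2 i.2⟩ with hφ
  set ψ : (↥(Finset.Ico m (m + N)) → ℤ) → (Fin N → ℤ) :=
    fun h i => h ⟨m + i.1, Finset.mem_Ico.2 ⟨Nat.le_add_right _ _, by omega⟩⟩ with hψ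
  have key := hIF.measure_inter_preimage_eq_mul (s := φ ⁻¹' S) (t := ψ ⁻¹' T)
    (measAll _) (measAll _)
  exact key

end Aux

/-- For an i.i.d. random walk with steps in `{-1,0,1}` and `p₊ > p₋`,
the probability that the walk stays strictly positive at every time `n ≥ 1`
equals `p₊ - p₋`. (Steps are indexed by `ℕ`, with `X i` the `(i+1)`-st step.) -/
theorem rw_stay_positive
    {Ω : Type*} [MeasurableSpace Ω] (P : Measure Ω) [IsProbabilityMeasure P]
    (X : ℕ → Ω → ℤ) (hmeas : ∀ i, Measurable (X i))
    (hval : ∀ i ω, X i ω = -1 ∨ X i ω = 0 ∨ X i ω = 1)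
    (hindep : iIndepFun X P)
    (hident : ∀ i j, IdentDistrib (X i) (X j) P P)
    (pplus pminus : ℝ≥0∞)
    (hpplus : pplus = P {ω | X 0 ω = 1})
    (hpminus : pminus = P {ω | X 0 ω = -1})
    (hlt : pminus < pplus)
    (Z : ℕ → Ω → ℤ) (hZ : ∀ n ω, Z n ω = ∑ i ∈ Finset.range n, X i ω) :
    P {ω | ∀ n, 1 ≤ n → 0 < Z n ω} = pplus - pminus := by
  classical
  set Y : ℕ → Ω → ℝ := fun i ω => (X i ω : ℝ) with hY
  set μR : ℝ := ∫ ω, Y 0 ω ∂P with hμR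
  set C : ℕ → ℕ → Set Ω :=
    fun m N => {ω | ∀ n, 1 ≤ n → n ≤ N → 0 < ∑ i ∈ Finset.Ico m (m + n), X i ω} with hC
  set Cinf : ℕ → Set Ω :=
    fun m => {ω | ∀ n, 1 ≤ n → 0 < ∑ i ∈ Finset.Ico m (m + n), X i ω} with hCinf
  set B : ℕ → Set Ω := fun m => {ω | ∀ j, j ≤ m → (∑ i ∈ Finset.Ico j m, X i ω) ≤ 0} with hB
  set D : ℕ → Set Ω := fun m => {ω | ∀ j, j ≤ m → (∑ i ∈ Finset.range j, X i ω) ≤ 0} with hD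
  -- measurability
  have hmsum : ∀ (s : Finset ℕ), Measurable (fun ω => ∑ i ∈ s, X i ω) :=
    fun s => Finset.measurable_sum s (fun i _ => hmeas i)
  have hmC : ∀ m N, MeasurableSet (C m N) := by
    intro m N
    have h : C m N = ⋂ n ∈ {n | 1 ≤ n ∧ n ≤ N},
        {ω | 0 < ∑ i ∈ Finset.Ico m (m + n), X i ω} := by
      ext ω; simp only [hC, Set.mem_setOf_eq, Set.mem_iInter, and_imp]
    rw [h]
    exact MeasurableSet.biInter (Set.to_countable _)
      (fun n _ => (hmsum _) (measAll {x : ℤ | 0 < x}))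
  have hmCinf : ∀ m, MeasurableSet (Cinf m) := by
    intro m
    have h : Cinf m = ⋂ n ∈ {n | 1 ≤ n},
        {ω | 0 < ∑ i ∈ Finset.Ico m (m + n), X i ω} := by
      ext ω; simp only [hCinf, Set.mem_setOf_eq, Set.mem_iInter]
    rw [h]
    exact MeasurableSet.biInter (Set.to_countable _)
      (fun n _ => (hmsum _) (measAll {x : ℤ | 0 < x}))
  have hmB : ∀ m, MeasurableSet (B m) := by
    intro m
    have h : B m = ⋂ j ∈ {j | j ≤ m}, {ω | (∑ i ∈ Finset.Ico j m, X i ω) ≤ 0} := by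
      ext ω; simp only [hB, Set.mem_setOf_eq, Set.mem_iInter]
    rw [h]
    exact MeasurableSet.biInter (Set.to_countable _)
      (fun j _ => (hmsum _) (measAll {x : ℤ | x ≤ 0}))
  have hmD : ∀ m, MeasurableSet (D m) := by
    intro m
    have h : D m = ⋂ j ∈ {j | j ≤ m}, {ω | (∑ i ∈ Finset.range j, X i ω) ≤ 0} := by
      ext ω; simp only [hD, Set.mem_setOf_eq, Set.mem_iInter]
    rw [h]
    exact MeasurableSet.biInter (Set.to_countable _)
      (fun j _ => (hmsum _) (measAll {x : ℤ | x ≤ 0}))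
  -- expressing C m N as a tuple event
  have hCkey : ∀ m N, C m N = {ω | (fun i : Fin N => X (m + (i : ℕ)) ω) ∈
      {v : Fin N → ℤ | ∀ n, 1 ≤ n → n ≤ N →
        0 < ∑ i ∈ Finset.range n, (if h : i < N then v ⟨i, h⟩ else 0)}} := by
    intro m N
    ext ω
    simp only [hC, Set.mem_setOf_eq]
    have hsum : ∀ n, n ≤ N →
        (∑ i ∈ Finset.range n, (if h : i < N then X (m + (⟨i, h⟩ : Fin N)) ω else 0))
          = ∑ i ∈ Finset.Ico m (m + n), X i ω := by
      intro n hn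
      rw [Finset.sum_Ico_eq_sum_range]
      have hnn : m + n - m = n := by omega
      rw [hnn]
      apply Finset.sum_congr rfl
      intro i hi
      rw [dif_pos (lt_of_lt_of_le (Finset.mem_range.1 hi) hn)]
    constructor
    · intro h n h1 h2
      rw [hsum n h2]; exact h n h1 h2
    · intro h n h1 h2
      rw [← hsum n h2]; exact h n h1 h2
  have htupleC : ∀ m N, P (C m N) = P (C 0 N) := by
    intro m N
    rw [hCkey m N, hCkey 0 N]
    exact aux_tuple P X hmeas hindep hident N _ _
      (fun a b h => by simpa [Fin.ext_iff] using h)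
      (fun a b h => by simpa [Fin.ext_iff] using h) _
  -- continuity from above
  have hCanti : ∀ m, Antitone (fun N => C m N) := by
    intro m N N' hNN' ω hω n h1 h2
    exact hω n h1 (h2.trans hNN')
  have hCiInter : ∀ m, Cinf m = ⋂ N, C m N := by
    intro m
    ext ω
    simp only [hCinf, hC, Set.mem_setOf_eq, Set.mem_iInter]
    exact ⟨fun h N n h1 _ => h n h1, fun h n h1 => h n n h1 le_rfl⟩
  have htendC : ∀ m, Tendsto (fun N => P (C m N)) atTop (𝓝 (P (Cinf m))) := by
    intro m
    rw [hCiInter m]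
    exact tendsto_measure_iInter_atTop (fun N => (hmC m N).nullMeasurableSet)
      (hCanti m) ⟨0, measure_ne_top P _⟩
  have hCinfEq : ∀ m, P (Cinf m) = P (Cinf 0) := by
    intro m
    have h1 := htendC m
    rw [show (fun N => P (C m N)) = fun N => P (C 0 N) from funext (htupleC m)] at h1
    exact tendsto_nhds_unique h1 (htendC 0)
  -- reversal: B and D
  have hBD : ∀ m, P (B m) = P (D m) := by
    intro m
    set S : Set (Fin m → ℤ) := {v | ∀ j, j ≤ m →
      (∑ i ∈ Finset.range j, (if h : i < m then v ⟨i, h⟩ else 0)) ≤ 0} with hS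
    have h2 : D m = {ω | (fun i : Fin m => X (i : ℕ) ω) ∈ S} := by
      ext ω
      simp only [hD, hS, Set.mem_setOf_eq]
      have hsum : ∀ j, j ≤ m →
          (∑ i ∈ Finset.range j, (if h : i < m then X ((⟨i, h⟩ : Fin m) : ℕ) ω else 0))
            = ∑ i ∈ Finset.range j, X i ω := by
        intro j hj
        apply Finset.sum_congr rfl
        intro i hi
        rw [dif_pos (lt_of_lt_of_le (Finset.mem_range.1 hi) hj)]
      constructor
      · intro h j hj; rw [hsum j hj]; exact h j hj
      · intro h j hj; rw [← hsum j hj]; exact h j hj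
    have h1 : B m = {ω | (fun i : Fin m => X (m - 1 - (i : ℕ)) ω) ∈ S} := by
      ext ω
      simp only [hB, hS, Set.mem_setOf_eq]
      have hsum : ∀ j, j ≤ m →
          (∑ i ∈ Finset.range j, (if h : i < m then X (m - 1 - ((⟨i, h⟩ : Fin m) : ℕ)) ω else 0))
            = ∑ i ∈ Finset.Ico (m - j) m, X i ω := by
        intro j hj
        rw [Finset.sum_Ico_eq_sum_range]
        have hmj : m - (m - j) = j := by omega
        rw [hmj]
        rw [← Finset.sum_range_reflect (fun i => X (m - j + i) ω) j]
        apply Finset.sum_congr rfl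
        intro i hi
        have hi' := Finset.mem_range.1 hi
        rw [dif_pos (by omega : i < m)]
        show X (m - 1 - i) ω = X (m - j + (j - 1 - i)) ω
        congr 1
        omega
      constructor
      · intro h j hj
        rw [hsum j hj]
        exact h (m - j) (by omega)
      · intro h j hj
        have := h (m - j) (by omega)
        rw [hsum (m - j) (by omega)] at this
        have hjj : m - (m - j) = j := by omega
        rwa [hjj] at this
    rw [h1, h2]
    exact aux_tuple P X hmeas hindep hident m _ _
      (fun a b h => by
        have ha := a.2; have hb := b.2
        change m - 1 - (a : ℕ) = m - 1 - (b : ℕ) at h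
        exact Fin.ext (by omega))
      (fun a b h => by simpa [Fin.ext_iff] using h) S
  -- independence splitting
  have hBkey : ∀ m, B m = {ω | (fun i : Fin m => X (i : ℕ) ω) ∈
      {v : Fin m → ℤ | ∀ j, j ≤ m →
        (∑ i ∈ Finset.Ico j m, (if h : i < m then v ⟨i, h⟩ else 0)) ≤ 0}} := by
    intro m
    ext ω
    simp only [hB, Set.mem_setOf_eq]
    have hsum : ∀ j, j ≤ m →
        (∑ i ∈ Finset.Ico j m, (if h : i < m then X ((⟨i, h⟩ : Fin m) : ℕ) ω else 0))
          = ∑ i ∈ Finset.Ico j m, X i ω := by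
      intro j hj
      apply Finset.sum_congr rfl
      intro i hi
      rw [dif_pos (Finset.mem_Ico.1 hi).2]
    constructor
    · intro h j hj; rw [hsum j hj]; exact h j hj
    · intro h j hj; rw [← hsum j hj]; exact h j hj
  have hsplit : ∀ m N, P (B m ∩ C m N) = P (B m) * P (C m N) := by
    intro m N
    rw [hBkey m, hCkey m N]
    exact aux_split P X hmeas hindep m N _ _
  have hsplitInf : ∀ m, P (B m ∩ Cinf m) = P (D m) * P (Cinf 0) := by
    intro m
    have e : B m ∩ Cinf m = ⋂ N, (B m ∩ C m N) := by
      rw [hCiInter m, Set.inter_iInter]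
    have t1 : Tendsto (fun N => P (B m ∩ C m N)) atTop (𝓝 (P (B m ∩ Cinf m))) := by
      rw [e]
      exact tendsto_measure_iInter_atTop
        (fun N => ((hmB m).inter (hmC m N)).nullMeasurableSet)
        (fun N N' h => Set.inter_subset_inter_right _ (hCanti m h))
        ⟨0, measure_ne_top P _⟩
    have t2 : Tendsto (fun N => P (B m ∩ C m N)) atTop (𝓝 (P (B m) * P (Cinf m))) := by
      rw [show (fun N => P (B m ∩ C m N)) = fun N => P (B m) * P (C m N) from
        funext (hsplit m)]
      exact ENNReal.Tendsto.const_mul (htendC m) (Or.inr (measure_ne_top P _))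
    rw [tendsto_nhds_unique t1 t2, hBD m, hCinfEq m]
  -- integrability and measurability of Y
  have hmY : ∀ i, Measurable (Y i) :=
    fun i => (measurable_of_countable (Int.cast : ℤ → ℝ)).comp (hmeas i)
  have hYint : ∀ i, Integrable (Y i) P := by
    intro i
    refine Integrable.mono' (integrable_const (1 : ℝ)) (hmY i).aestronglyMeasurable ?_
    apply ae_of_all
    intro ω
    rcases hval i ω with h | h | h <;> simp [hY, h]
  -- mean value
  have hsets1 : MeasurableSet {ω | X 0 ω = 1} := (hmeas 0) (measAll ({1} : Set ℤ))
  have hsets2 : MeasurableSet {ω | X 0 ω = -1} := (hmeas 0) (measAll ({-1} : Set ℤ))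
  have hYpt : ∀ ω, Y 0 ω = Set.indicator {ω | X 0 ω = 1} (fun _ => (1 : ℝ)) ω
      - Set.indicator {ω | X 0 ω = -1} (fun _ => (1 : ℝ)) ω := by
    intro ω
    rcases hval 0 ω with h | h | h <;>
      simp [hY, h, Set.indicator_apply, Set.mem_setOf_eq]
  have hμR_eq : μR = pplus.toReal - pminus.toReal := by
    rw [hμR]
    rw [integral_congr_ae (ae_of_all _ hYpt)]
    rw [integral_sub ((integrable_const (1 : ℝ)).indicator hsets1)
      ((integrable_const (1 : ℝ)).indicator hsets2)]
    rw [integral_indicator_const (1 : ℝ) hsets1, integral_indicator_const (1 : ℝ) hsets2]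
    rw [hpplus, hpminus]
    simp [Measure.real]
  have hμpos : 0 < μR := by
    rw [hμR_eq, sub_pos]
    have hlt' : P {ω | X 0 ω = -1} < P {ω | X 0 ω = 1} := by
      rw [← hpplus, ← hpminus]; exact hlt
    rw [hpplus, hpminus]
    exact (ENNReal.toReal_lt_toReal (measure_ne_top P _) (measure_ne_top P _)).2 hlt'
  -- strong law of large numbers
  have hslln : ∀ᵐ ω ∂P,
      Tendsto (fun n : ℕ => (∑ i ∈ Finset.range n, Y i ω) / n) atTop (𝓝 μR) := by
    have := strong_law_ae_real Y (hYint 0)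
      (fun i j hij => (hindep.indepFun hij).comp
        (measurable_of_countable (Int.cast : ℤ → ℝ))
        (measurable_of_countable (Int.cast : ℤ → ℝ)))
      (fun i => (hident i 0).comp (measurable_of_countable (Int.cast : ℤ → ℝ)))
    exact this
  have hZtop : ∀ᵐ ω ∂P, Tendsto (fun n => ∑ i ∈ Finset.range n, X i ω) atTop atTop := by
    filter_upwards [hslln] with ω hω
    rw [← tendsto_intCast_atTop_iff (R := ℝ)]
    have hmul := Tendsto.pos_mul_atTop hμpos hω tendsto_natCast_atTop_atTop
    apply hmul.congr'
    filter_upwards [eventually_ge_atTop 1] with n hn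
    have hn0 : (n : ℝ) ≠ 0 := Nat.cast_ne_zero.2 (by omega)
    rw [div_mul_cancel₀ _ hn0]
    push_cast
    rfl
  -- a.e. covering by the events B m ∩ Cinf m
  have hcover : ∀ᵐ ω ∂P, ∃ m, ω ∈ B m ∩ Cinf m := by
    filter_upwards [hZtop] with ω hω
    set S : ℕ → ℤ := fun n => ∑ i ∈ Finset.range n, X i ω with hSdef
    obtain ⟨N₀, hN₀⟩ := eventually_atTop.1 (hω.eventually_gt_atTop 0)
    set N₁ := max N₀ 1 with hN₁
    set F := (Finset.range N₁).image S with hF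
    have hFne : F.Nonempty :=
      ⟨S 0, Finset.mem_image.2 ⟨0, Finset.mem_range.2 (by omega), rfl⟩⟩
    set b := F.min' hFne with hb
    set G := (Finset.range N₁).filter (fun n => S n = b) with hG
    have hGne : G.Nonempty := by
      obtain ⟨n, hn, hSn⟩ := Finset.mem_image.1 (F.min'_mem hFne)
      exact ⟨n, Finset.mem_filter.2 ⟨hn, hSn⟩⟩
    set m := G.max' hGne with hm
    have hmmem := Finset.mem_filter.1 (G.max'_mem hGne)
    have hmN₁ : m < N₁ := Finset.mem_range.1 hmmem.1
    have hSm : S m = b := hmmem.2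
    have hble : ∀ n, n < N₁ → b ≤ S n := fun n hn =>
      F.min'_le _ (Finset.mem_image.2 ⟨n, Finset.mem_range.2 hn, rfl⟩)
    have hS0 : S 0 = 0 := by simp [hSdef]
    have hb0 : b ≤ 0 := by
      have := hble 0 (by omega)
      omega
    have hIcosum : ∀ j k, j ≤ k → (∑ i ∈ Finset.Ico j k, X i ω) = S k - S j := by
      intro j k hjk
      have h := Finset.sum_range_add_sum_Ico (fun i => X i ω) hjk
      simp only [hSdef] at h ⊢
      omega
    simp only [Set.mem_inter_iff, hB, hCinf, Set.mem_setOf_eq]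
    refine ⟨m, ?_, ?_⟩
    · intro j hj
      rw [hIcosum j m hj]
      have := hble j (by omega)
      omega
    · intro n hn
      rw [hIcosum m (m + n) (by omega)]
      by_cases hcase : m + n < N₁
      · have h1 : b ≤ S (m + n) := hble _ hcase
        have h2 : S (m + n) ≠ b := by
          intro heq
          have hmem : m + n ∈ G := Finset.mem_filter.2 ⟨Finset.mem_range.2 hcase, heq⟩
          have := G.le_max' _ hmem
          omega
        omega
      · have h1 : 0 < S (m + n) := hN₀ _ (by omega)
        omega
  -- pairwise disjointness
  have hdisj : Pairwise (Function.onFun Disjoint (fun m => B m ∩ Cinf m)) := by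
    have key : ∀ m m', m < m' → ∀ ω, ω ∈ B m ∩ Cinf m → ω ∈ B m' ∩ Cinf m' → False := by
      intro m m' h ω h1 h2
      have hc := h1.2 (m' - m) (by omega)
      rw [show m + (m' - m) = m' by omega] at hc
      have hb := h2.1 m (le_of_lt h)
      exact absurd hc (not_lt.2 hb)
    intro m m' hmm'
    simp only [Function.onFun, Set.disjoint_left]
    intro ω h1 h2
    rcases lt_or_gt_of_ne hmm' with h | h
    · exact key m m' h ω h1 h2
    · exact key m' m h ω h2 h1
  -- total mass one
  have hsum1 : (∑' m, P (B m ∩ Cinf m)) = 1 := by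
    rw [← measure_iUnion hdisj (fun m => (hmB m).inter (hmCinf m))]
    have hnull : P (⋃ m, B m ∩ Cinf m)ᶜ = 0 := by
      have hsub : (⋃ m, B m ∩ Cinf m)ᶜ ⊆ {ω | ¬ ∃ m, ω ∈ B m ∩ Cinf m} := by
        intro ω hω
        simpa [Set.mem_iUnion] using hω
      refine measure_mono_null hsub ?_
      simpa [ae_iff] using hcover
    have := prob_compl_eq_zero_iff
      (MeasurableSet.iUnion (fun m => (hmB m).inter (hmCinf m))) |>.1 hnull
    exact this
  -- renewal equation
  have hrenew : (∑' m, P (D m)) * P (Cinf 0) = 1 := by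
    rw [← ENNReal.tsum_mul_right, ← hsum1]
    exact tsum_congr fun m => (hsplitInf m).symm
  -- consequences of the renewal equation
  have hsfin : (∑' m, P (D m)) ≠ ∞ := by
    intro h
    rw [h] at hrenew
    rcases eq_or_ne (P (Cinf 0)) 0 with h0 | h0
    · rw [h0, mul_zero] at hrenew; exact one_ne_zero hrenew.symm
    · rw [ENNReal.top_mul h0] at hrenew; exact ENNReal.top_ne_one hrenew
  have hs0 : (∑' m, P (D m)) ≠ 0 := by
    intro h
    rw [h, zero_mul] at hrenew
    exact one_ne_zero hrenew.symm
  -- basic properties of D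
  have hDanti : Antitone D := by
    intro m m' h ω hω j hj
    exact hω j (hj.trans h)
  have hD0 : ∀ ω, ω ∈ D 0 := by
    intro ω j hj
    have hj0 : j = 0 := by omega
    subst hj0
    simp
  -- the walk G stopped at the first failure of D
  set G : ℕ → Ω → ℝ := fun n ω => ∑ i ∈ Finset.range n, (D i).indicator (Y i) ω with hG
  -- pointwise facts about the first failure time
  have hfind_mem : ∀ ω (hex : ∃ i, ω ∉ D i) i, i < Nat.find hex → ω ∈ D i :=
    fun ω hex i hi => not_not.1 (Nat.find_min hex hi)
  have hfind_pos : ∀ ω (hex : ∃ i, ω ∉ D i), 1 ≤ Nat.find hex := by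
    intro ω hex
    rcases Nat.eq_zero_or_pos (Nat.find hex) with h | h
    · exfalso
      have hspec := Nat.find_spec hex
      rw [h] at hspec
      exact hspec (hD0 ω)
    · exact h
  have hfind_one : ∀ ω (hex : ∃ i, ω ∉ D i),
      ∑ i ∈ Finset.range (Nat.find hex), X i ω = 1 := by
    intro ω hex
    set k := Nat.find hex with hk
    have hk1 : 1 ≤ k := hfind_pos ω hex
    have hDk1 : ω ∈ D (k - 1) := hfind_mem ω hex (k - 1) (by omega)
    have hnotk : ω ∉ D k := Nat.find_spec hex
    simp only [hD, Set.mem_setOf_eq, not_forall] at hnotk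
    obtain ⟨j, hjk, hjpos⟩ := hnotk
    rw [not_le] at hjpos
    have hjeq : j = k := by
      by_contra hne
      have hjk1 : j ≤ k - 1 := by omega
      have := hDk1 j hjk1
      omega
    rw [hjeq] at hjpos
    have hsplit : ∑ i ∈ Finset.range k, X i ω
        = (∑ i ∈ Finset.range (k - 1), X i ω) + X (k - 1) ω := by
      conv_lhs => rw [show k = (k - 1) + 1 by omega, Finset.sum_range_succ]
    have hprev : ∑ i ∈ Finset.range (k - 1), X i ω ≤ 0 := hDk1 (k - 1) le_rfl
    have hXb : X (k - 1) ω ≤ 1 := by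
      rcases hval (k - 1) ω with h | h | h <;> omega
    omega
  have hGmin : ∀ ω (hex : ∃ i, ω ∉ D i) n,
      G n ω = ∑ i ∈ Finset.range (min (Nat.find hex) n), Y i ω := by
    intro ω hex n
    set k := Nat.find hex with hk
    have hstep : ∀ i, (D i).indicator (Y i) ω = if i < k then Y i ω else 0 := by
      intro i
      by_cases hik : i < k
      · rw [if_pos hik, Set.indicator_of_mem (hfind_mem ω hex i hik)]
      · rw [if_neg hik, Set.indicator_of_notMem]
        intro hmem
        exact (Nat.find_spec hex) (hDanti (not_lt.1 hik) hmem)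
    simp only [hG]
    calc ∑ i ∈ Finset.range n, (D i).indicator (Y i) ω
        = ∑ i ∈ Finset.range n, (if i < k then Y i ω else 0) :=
          Finset.sum_congr rfl (fun i _ => hstep i)
      _ = ∑ i ∈ (Finset.range n).filter (· < k), Y i ω := (Finset.sum_filter _ _).symm
      _ = ∑ i ∈ Finset.range (min k n), Y i ω := by
          apply Finset.sum_congr _ (fun i _ => rfl)
          ext i
          simp only [Finset.mem_filter, Finset.mem_range, lt_min_iff]
          omega
  have hGall : ∀ ω n, (¬ ∃ i, ω ∉ D i) → G n ω = ∑ i ∈ Finset.range n, Y i ω := by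
    intro ω n hex
    push_neg at hex
    simp only [hG]
    exact Finset.sum_congr rfl (fun i _ => Set.indicator_of_mem (hex i) _)
  have hYcast : ∀ (s : Finset ℕ) ω, ∑ i ∈ s, Y i ω = ((∑ i ∈ s, X i ω : ℤ) : ℝ) := by
    intro s ω
    simp only [hY]
    push_cast
    rfl
  -- G is bounded above by 1
  have hGle1 : ∀ n ω, G n ω ≤ 1 := by
    intro n ω
    by_cases hex : ∃ i, ω ∉ D i
    · rw [hGmin ω hex n, hYcast]
      set k := Nat.find hex with hk
      rcases le_or_gt k n with h | h
      · rw [min_eq_left h]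
        rw [hfind_one ω hex]
        norm_num
      · rw [min_eq_right (le_of_lt h)]
        rcases Nat.eq_zero_or_pos n with rfl | hn
        · simp
        · have hmem : ω ∈ D n := hfind_mem ω hex n h
          have := hmem n le_rfl
          have hle : ((∑ i ∈ Finset.range n, X i ω : ℤ) : ℝ) ≤ 0 := by exact_mod_cast this
          linarith
    · rw [hGall ω n hex, hYcast]
      push_neg at hex
      have := hex n n le_rfl
      have hle : ((∑ i ∈ Finset.range n, X i ω : ℤ) : ℝ) ≤ 0 := by exact_mod_cast this
      linarith
  -- G n converges to 1 a.e.
  have hGtend : ∀ᵐ ω ∂P, Tendsto (fun n => G n ω) atTop (𝓝 1) := by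
    filter_upwards [hZtop] with ω hω
    have hex : ∃ i, ω ∉ D i := by
      obtain ⟨n, hn⟩ := (hω.eventually_gt_atTop 0).exists
      exact ⟨n, fun hD' => absurd (hD' n le_rfl) (not_le.2 hn)⟩
    apply tendsto_atTop_of_eventually_const (i₀ := Nat.find hex)
    intro n hn
    rw [hGmin ω hex n, min_eq_left hn, hYcast, hfind_one ω hex]
    norm_num
  -- expectation of each summand
  have hDkey : ∀ m, D m = {ω | (fun i : Fin m => X (i : ℕ) ω) ∈
      {v : Fin m → ℤ | ∀ j, j ≤ m →
        (∑ i ∈ Finset.range j, (if h : i < m then v ⟨i, h⟩ else 0)) ≤ 0}} := by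
    intro m
    ext ω
    simp only [hD, Set.mem_setOf_eq]
    have hsum : ∀ j, j ≤ m →
        (∑ i ∈ Finset.range j, (if h : i < m then X ((⟨i, h⟩ : Fin m) : ℕ) ω else 0))
          = ∑ i ∈ Finset.range j, X i ω := by
      intro j hj
      apply Finset.sum_congr rfl
      intro i hi
      rw [dif_pos (lt_of_lt_of_le (Finset.mem_range.1 hi) hj)]
    constructor
    · intro h j hj; rw [hsum j hj]; exact h j hj
    · intro h j hj; rw [← hsum j hj]; exact h j hj
  have hXikey : ∀ (i : ℕ) (c : ℤ), {ω | X i ω = c} = {ω | (fun k : Fin 1 => X (i + (k : ℕ)) ω) ∈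
      {v : Fin 1 → ℤ | v 0 = c}} := by
    intro i c
    ext ω
    simp
  have hDsplit : ∀ (i : ℕ) (c : ℤ), P (D i ∩ {ω | X i ω = c}) = P (D i) * P {ω | X 0 ω = c} := by
    intro i c
    rw [hDkey i, hXikey i c]
    rw [aux_split P X hmeas hindep i 1 _ _]
    rw [← hDkey i, ← hXikey i c]
    have hident' : P {ω | X i ω = c} = P {ω | X 0 ω = c} :=
      (hident i 0).measure_mem_eq (measAll ({c} : Set ℤ))
    rw [hident']
  have hterm : ∀ i, ∫ ω, (D i).indicator (Y i) ω ∂P = μR * (P (D i)).toReal := by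
    intro i
    have hpt : ∀ ω, (D i).indicator (Y i) ω
        = (D i ∩ {ω' | X i ω' = 1}).indicator (fun _ => (1 : ℝ)) ω
          - (D i ∩ {ω' | X i ω' = -1}).indicator (fun _ => (1 : ℝ)) ω := by
      intro ω
      by_cases hmem : ω ∈ D i
      · rcases hval i ω with h | h | h <;>
          simp [Set.indicator_apply, hmem, h, hY, Set.mem_setOf_eq]
      · simp [Set.indicator_apply, hmem, Set.mem_setOf_eq]
    have hms1 : MeasurableSet (D i ∩ {ω' | X i ω' = 1}) :=
      (hmD i).inter ((hmeas i) (measAll ({1} : Set ℤ)))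
    have hms2 : MeasurableSet (D i ∩ {ω' | X i ω' = -1}) :=
      (hmD i).inter ((hmeas i) (measAll ({-1} : Set ℤ)))
    rw [integral_congr_ae (ae_of_all _ hpt)]
    rw [integral_sub ((integrable_const (1 : ℝ)).indicator hms1)
      ((integrable_const (1 : ℝ)).indicator hms2)]
    rw [integral_indicator_const (1 : ℝ) hms1, integral_indicator_const (1 : ℝ) hms2]
    simp only [Measure.real]
    rw [hDsplit i 1, hDsplit i (-1), ← hpplus, ← hpminus]
    rw [ENNReal.toReal_mul, ENNReal.toReal_mul, hμR_eq]
    simp only [smul_eq_mul, mul_one]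
    ring
  have hGint : ∀ n, ∫ ω, G n ω ∂P = μR * ∑ i ∈ Finset.range n, (P (D i)).toReal := by
    intro n
    simp only [hG]
    rw [integral_finset_sum _ (fun i _ => (hYint i).indicator (hmD i))]
    rw [Finset.mul_sum]
    exact Finset.sum_congr rfl (fun i _ => hterm i)
  -- the domination function τ
  set τ : Ω → ℕ := fun ω => if hex : ∃ i, ω ∉ D i then Nat.find hex else 0 with hτ
  have hτeq : ∀ ω (hex : ∃ i, ω ∉ D i), τ ω = Nat.find hex := by
    intro ω hex
    simp only [hτ, dif_pos hex]
  have hτmeas : Measurable τ := by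
    apply measurable_to_countable'
    intro k
    rcases Nat.eq_zero_or_pos k with rfl | hk
    · have hfib : τ ⁻¹' {0} = (D 0)ᶜ ∪ ⋂ i, D i := by
        ext ω
        simp only [Set.mem_preimage, Set.mem_singleton_iff, Set.mem_union,
          Set.mem_compl_iff, Set.mem_iInter]
        constructor
        · intro h
          by_cases hex : ∃ i, ω ∉ D i
          · left
            rw [hτeq ω hex] at h
            have := Nat.find_spec hex
            rwa [h] at this
          · right
            push_neg at hex
            exact hex
        · rintro (h | h)
          · have hex : ∃ i, ω ∉ D i := ⟨0, h⟩
            rw [hτeq ω hex]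
            rw [Nat.find_eq_zero]
            exact h
          · simp only [hτ, dif_neg (by push_neg; exact h : ¬ ∃ i, ω ∉ D i)]
      rw [hfib]
      exact ((hmD 0).compl).union (MeasurableSet.iInter (fun i => hmD i))
    · have hfib : τ ⁻¹' {k} = (⋂ i ∈ Set.Iio k, D i) ∩ (D k)ᶜ := by
        ext ω
        simp only [Set.mem_preimage, Set.mem_singleton_iff, Set.mem_inter_iff,
          Set.mem_iInter, Set.mem_compl_iff, Set.mem_Iio]
        constructor
        · intro h
          have hex : ∃ i, ω ∉ D i := by
            by_contra hex
            simp only [hτ, dif_neg hex] at h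
            omega
          rw [hτeq ω hex] at h
          subst h
          exact ⟨fun i hi => hfind_mem ω hex i hi, Nat.find_spec hex⟩
        · rintro ⟨h1, h2⟩
          have hex : ∃ i, ω ∉ D i := ⟨k, h2⟩
          rw [hτeq ω hex]
          exact (Nat.find_eq_iff hex).2 ⟨h2, fun m hm => not_not_intro (h1 m hm)⟩
      rw [hfib]
      exact (MeasurableSet.biInter (Set.to_countable _) (fun i _ => hmD i)).inter (hmD k).compl
  have hτle : ∀ ω, (τ ω : ℝ≥0∞) ≤ ∑' i, (D i).indicator (fun _ => (1 : ℝ≥0∞)) ω := by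
    intro ω
    by_cases hex : ∃ i, ω ∉ D i
    · rw [hτeq ω hex]
      calc (Nat.find hex : ℝ≥0∞)
          = ∑ _i ∈ Finset.range (Nat.find hex), (1 : ℝ≥0∞) := by simp
        _ = ∑ i ∈ Finset.range (Nat.find hex), (D i).indicator (fun _ => (1 : ℝ≥0∞)) ω := by
            apply Finset.sum_congr rfl
            intro i hi
            rw [Set.indicator_of_mem (hfind_mem ω hex i (Finset.mem_range.1 hi))]
        _ ≤ ∑' i, (D i).indicator (fun _ => (1 : ℝ≥0∞)) ω := ENNReal.sum_le_tsum _
    · simp only [hτ, dif_neg hex]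
      simp
  have hτint : Integrable (fun ω => (τ ω : ℝ)) P := by
    constructor
    · exact ((measurable_of_countable (Nat.cast : ℕ → ℝ)).comp hτmeas).aestronglyMeasurable
    · show (∫⁻ ω, ‖(τ ω : ℝ)‖₊ ∂P) < ∞
      calc ∫⁻ ω, (‖(τ ω : ℝ)‖₊ : ℝ≥0∞) ∂P
          = ∫⁻ ω, (τ ω : ℝ≥0∞) ∂P := by
            apply lintegral_congr
            intro ω
            simp
        _ ≤ ∫⁻ ω, ∑' i, (D i).indicator (fun _ => (1 : ℝ≥0∞)) ω ∂P := lintegral_mono hτle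
        _ = ∑' i, ∫⁻ ω, (D i).indicator (fun _ => (1 : ℝ≥0∞)) ω ∂P :=
            lintegral_tsum (fun i => (measurable_one.indicator (hmD i)).aemeasurable)
        _ = ∑' i, P (D i) := by
            apply tsum_congr
            intro i
            exact lintegral_indicator_one (hmD i)
        _ < ∞ := hsfin.lt_top
  have hbound : ∀ n, ∀ᵐ ω ∂P, ‖G n ω‖ ≤ (τ ω : ℝ) := by
    intro n
    filter_upwards [hZtop] with ω hω
    have hex : ∃ i, ω ∉ D i := by
      obtain ⟨m', hm'⟩ := (hω.eventually_gt_atTop 0).exists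
      exact ⟨m', fun hD' => absurd (hD' m' le_rfl) (not_le.2 hm')⟩
    rw [hτeq ω hex, hGmin ω hex n]
    calc ‖∑ i ∈ Finset.range (min (Nat.find hex) n), Y i ω‖
        ≤ ∑ i ∈ Finset.range (min (Nat.find hex) n), ‖Y i ω‖ := norm_sum_le _ _
      _ ≤ ∑ _i ∈ Finset.range (min (Nat.find hex) n), (1 : ℝ) := by
          apply Finset.sum_le_sum
          intro i _
          rcases hval i ω with h | h | h <;> simp [hY, h]
      _ = (min (Nat.find hex) n : ℕ) := by simp
      _ ≤ (Nat.find hex : ℝ) := by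
          have := min_le_left (Nat.find hex) n
          exact_mod_cast this
  have hGmeas : ∀ n, AEStronglyMeasurable (G n) P := by
    intro n
    apply Measurable.aestronglyMeasurable
    simp only [hG]
    exact Finset.measurable_sum _ (fun i _ => (hmY i).indicator (hmD i))
  have hDCT := tendsto_integral_of_dominated_convergence (bound := fun ω => (τ ω : ℝ))
    hGmeas hτint hbound hGtend
  have hint1 : ∫ _ω, (1 : ℝ) ∂P = 1 := by simp
  rw [hint1] at hDCT
  -- Wald's identity
  have hsummable : Summable (fun i => (P (D i)).toReal) := ENNReal.summable_toReal hsfin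
  have hwald : μR * (∑' m, P (D m)).toReal = 1 := by
    have h2 : Tendsto (fun n => μR * ∑ i ∈ Finset.range n, (P (D i)).toReal) atTop
        (𝓝 (μR * ∑' i, (P (D i)).toReal)) :=
      hsummable.hasSum.tendsto_sum_nat.const_mul μR
    have h1 : Tendsto (fun n => μR * ∑ i ∈ Finset.range n, (P (D i)).toReal) atTop (𝓝 1) := by
      rw [show (fun n => μR * ∑ i ∈ Finset.range n, (P (D i)).toReal)
        = fun n => ∫ ω, G n ω ∂P from funext (fun n => (hGint n).symm)]
      exact hDCT
    have huniq := tendsto_nhds_unique h2 h1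
    rwa [← ENNReal.tsum_toReal_eq (fun m => measure_ne_top P _)] at huniq
  -- final arithmetic
  have hgoal : {ω | ∀ n, 1 ≤ n → 0 < Z n ω} = Cinf 0 := by
    ext ω
    simp only [hCinf, Set.mem_setOf_eq]
    constructor
    · intro h n hn
      have := h n hn
      rw [hZ n ω, Finset.range_eq_Ico] at this
      rwa [show (0 : ℕ) + n = n by omega]
    · intro h n hn
      have := h n hn
      rw [show (0 : ℕ) + n = n by omega] at this
      rwa [hZ n ω, Finset.range_eq_Ico]
  rw [hgoal]
  set s := ∑' m, P (D m) with hs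
  have hstR : s.toReal ≠ 0 := by
    intro h
    rw [h, mul_zero] at hwald
    exact zero_ne_one hwald
  have hstRpos : 0 < s.toReal :=
    lt_of_le_of_ne ENNReal.toReal_nonneg (Ne.symm hstR)
  have hainv : P (Cinf 0) = s⁻¹ := by
    have := congrArg (fun x => s⁻¹ * x) hrenew
    simp only [mul_one] at this
    rw [← mul_assoc, ENNReal.inv_mul_cancel hs0 hsfin, one_mul] at this
    exact this
  have hμReq' : μR = (s.toReal)⁻¹ := by
    field_simp at hwald ⊢
    linarith [hwald]
  have hofReal : ENNReal.ofReal μR = s⁻¹ := by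
    rw [hμReq', ENNReal.ofReal_inv_of_pos hstRpos, ENNReal.ofReal_toReal hsfin]
  have hsub : pplus - pminus = ENNReal.ofReal μR := by
    rw [hμR_eq]
    rw [ENNReal.ofReal_sub _ ENNReal.toReal_nonneg]
    rw [ENNReal.ofReal_toReal, ENNReal.ofReal_toReal]
    · rw [hpminus]; exact measure_ne_top P _
    · rw [hpplus]; exact measure_ne_top P _
  rw [hainv, hsub, hofReal]
end

section
/- Let (X_i)_{i≥1} be independent, identically distributed random variables on a probability space (Ω,ℙ), each taking values in {-1,0,1}, and set p₊ = ℙ(X_i = 1), p₋ = ℙ(X_i = -1). Assume p₊ > p₋. Let Z_0 = 0 and Z_n = X_1 + ⋯ + X_n. Then the probability that the walk ever reaches -1 satisfies ℙ(∃ n ≥ 1, Z_n = -1) = p₋ / p₊. -/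
open MeasureTheory ProbabilityTheory Filter
open scoped ENNReal Topology

/-- If each step is `≥ -1` and no partial sum in `[1,n]` equals `-1`, then the `n`-th
partial sum is nonnegative (the walk cannot jump over `-1`). -/
lemma rw_aux_nonneg (x : ℕ → ℤ) (hx : ∀ i, -1 ≤ x i) :
    ∀ n, (∀ k, 1 ≤ k → k ≤ n → (∑ i ∈ Finset.range k, x i) ≠ -1) →
      0 ≤ ∑ i ∈ Finset.range n, x i := by
  intro n
  induction n with
  | zero => simp
  | succ n ih =>
    intro h
    have h0 : 0 ≤ ∑ i ∈ Finset.range n, x i :=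
      ih fun k hk hkn => h k hk (hkn.trans (Nat.le_succ n))
    have hlast : (∑ i ∈ Finset.range (n + 1), x i) ≠ -1 := h (n + 1) (by omega) le_rfl
    rw [Finset.sum_range_succ] at hlast ⊢
    have := hx n
    omega

/-- Expectation of `φ ∘ X` for a `{-1,0,1}`-valued random variable `X`, when `φ 0 = 0`. -/
lemma rw_aux_expect {Ω : Type*} [MeasurableSpace Ω] (P : Measure Ω) [IsProbabilityMeasure P]
    (X : Ω → ℤ) (hX : Measurable X) (hval : ∀ ω, X ω = -1 ∨ X ω = 0 ∨ X ω = 1)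
    (φ : ℤ → ℝ) (hφ0 : φ 0 = 0) :
    ∫ ω, φ (X ω) ∂P
      = (P {ω | X ω = -1}).toReal * φ (-1) + (P {ω | X ω = 1}).toReal * φ 1 := by
  have hs1 : MeasurableSet {ω | X ω = -1} := hX (measurableSet_singleton (-1))
  have hs2 : MeasurableSet {ω | X ω = 1} := hX (measurableSet_singleton (1 : ℤ))
  have hfun : (fun ω => φ (X ω))
      = fun ω => Set.indicator {ω | X ω = -1} (fun _ => φ (-1)) ω
          + Set.indicator {ω | X ω = 1} (fun _ => φ 1) ω := by
    funext ω
    rcases hval ω with h | h | h <;>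
      simp [Set.indicator, Set.mem_setOf_eq, h, hφ0]
  rw [hfun, integral_add ((integrable_const _).indicator hs1)
      ((integrable_const _).indicator hs2),
    integral_indicator_const _ hs1, integral_indicator_const _ hs2]
  simp [smul_eq_mul]
  rfl

/-- For an i.i.d. random walk with steps in `{-1,0,1}` and `p₊ > p₋`,
the probability that the walk ever reaches `-1` equals `p₋ / p₊`.
(Steps are indexed by `ℕ`, with `X i` the `(i+1)`-st step.) -/
theorem rw_hits_minus_one
    {Ω : Type*} [MeasurableSpace Ω] (P : Measure Ω) [IsProbabilityMeasure P]
    (X : ℕ → Ω → ℤ) (hmeas : ∀ i, Measurable (X i))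
    (hval : ∀ i ω, X i ω = -1 ∨ X i ω = 0 ∨ X i ω = 1)
    (hindep : iIndepFun X P)
    (hident : ∀ i j, IdentDistrib (X i) (X j) P P)
    (pplus pminus : ℝ≥0∞)
    (hpplus : pplus = P {ω | X 0 ω = 1})
    (hpminus : pminus = P {ω | X 0 ω = -1})
    (hlt : pminus < pplus)
    (Z : ℕ → Ω → ℤ) (hZ : ∀ n ω, Z n ω = ∑ i ∈ Finset.range n, X i ω) :
    P {ω | ∃ n, 1 ≤ n ∧ Z n ω = -1} = pminus / pplus := by
  classical
  have hZmeas : ∀ n, Measurable (Z n) := by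
    intro n
    have : Z n = fun ω => ∑ i ∈ Finset.range n, X i ω := funext (hZ n)
    rw [this]
    exact Finset.measurable_sum _ fun i _ => hmeas i
  -- laws of the individual steps
  have hXm : ∀ i (c : ℤ), P {ω | X i ω = c} = P {ω | X 0 ω = c} := by
    intro i c
    have hmap := (hident i 0).map_eq
    have h1 : P {ω | X i ω = c} = P.map (X i) {c} := by
      rw [Measure.map_apply (hmeas i) (measurableSet_singleton c)]; rfl
    have h2 : P {ω | X 0 ω = c} = P.map (X 0) {c} := by
      rw [Measure.map_apply (hmeas 0) (measurableSet_singleton c)]; rfl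
    rw [h1, h2, hmap]
  -- the hitting event
  set Hit : Set Ω := {ω | ∃ n, 1 ≤ n ∧ Z n ω = -1} with hHitdef
  have hHitmeas : MeasurableSet Hit := by
    have : Hit = ⋃ n, ⋃ (_ : 1 ≤ n), {ω | Z n ω = -1} := by
      ext ω; simp [hHitdef, Set.mem_setOf_eq]
    rw [this]
    exact MeasurableSet.iUnion fun n => MeasurableSet.iUnion fun _ =>
      (hZmeas n) (measurableSet_singleton (-1))
  -- nonnegativity before hitting
  have hZnonneg : ∀ n ω, (¬ ∃ k, 1 ≤ k ∧ k ≤ n ∧ Z k ω = -1) → 0 ≤ Z n ω := by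
    intro n ω h
    push_neg at h
    rw [hZ]
    refine rw_aux_nonneg (fun i => X i ω) (fun i => ?_) n (fun k hk hkn => ?_)
    · rcases hval i ω with h' | h' | h' <;> rw [h'] <;> omega
    · rw [← hZ]; exact h k hk hkn
  rcases eq_or_lt_of_le (zero_le : 0 ≤ pminus) with hzero | hpos
  · -- degenerate case : p₋ = 0
    have hnull : ∀ i, P {ω | X i ω = -1} = 0 := fun i => by
      rw [hXm i, ← hpminus, ← hzero]
    have hsub : Hit ⊆ ⋃ i, {ω | X i ω = -1} := by
      intro ω hω
      rcases hω with ⟨n, hn, hZn⟩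
      by_contra hmem
      simp only [Set.mem_iUnion, Set.mem_setOf_eq, not_exists] at hmem
      have : 0 ≤ Z n ω := by
        rw [hZ]
        refine Finset.sum_nonneg fun i _ => ?_
        rcases hval i ω with h' | h' | h'
        · exact absurd h' (hmem i)
        all_goals omega
      omega
    have : P Hit = 0 := measure_mono_null hsub (measure_iUnion_null hnull)
    rw [this, ← hzero, ENNReal.zero_div]
  · -- main case : 0 < p₋ < p₊
    have hfinp : pplus ≠ ⊤ := by rw [hpplus]; exact (measure_lt_top P _).ne
    have hfinm : pminus ≠ ⊤ := by rw [hpminus]; exact (measure_lt_top P _).ne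
    set a := pminus.toReal with ha_def
    set b := pplus.toReal with hb_def
    have ha : 0 < a := ENNReal.toReal_pos hpos.ne' hfinm
    have hab : a < b := (ENNReal.toReal_lt_toReal hfinm hfinp).mpr hlt
    have hb : 0 < b := ha.trans hab
    set r := a / b with hr_def
    have hr0 : 0 < r := div_pos ha hb
    have hr1 : r < 1 := (div_lt_one hb).mpr hab
    have hrinv : 1 ≤ r⁻¹ := (one_le_inv₀ hr0).mpr hr1.le
    have hPm : ∀ i, (P {ω | X i ω = -1}).toReal = a := fun i => by
      rw [hXm i, ← hpminus]
    have hPp : ∀ i, (P {ω | X i ω = 1}).toReal = b := fun i => by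
      rw [hXm i, ← hpplus]
    -- helper : zpow bound
    have hzle1 : ∀ k : ℤ, 0 ≤ k → r ^ k ≤ 1 := by
      intro k hk
      lift k to ℕ using hk
      rw [zpow_natCast]
      exact pow_le_one₀ hr0.le hr1.le
    have hzpow_meas : Measurable fun z : ℤ => (r : ℝ) ^ z := measurable_of_countable _
    have hcast_meas : Measurable fun z : ℤ => (z : ℝ) := measurable_of_countable _
    -- integrability from boundedness
    have hbint : ∀ (u : Ω → ℝ), Measurable u → ∀ C : ℝ, (∀ ω, |u ω| ≤ C) → Integrable u P := by
      intro u hu C hC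
      exact (integrable_const C).mono' hu.aestronglyMeasurable
        (Filter.Eventually.of_forall fun ω => by simpa using hC ω)
    -- the events "hit -1 by time n"
    set A : ℕ → Set Ω := fun n => {ω | ∃ k, 1 ≤ k ∧ k ≤ n ∧ Z k ω = -1} with hA_def
    have hAmeas : ∀ n, MeasurableSet (A n) := by
      intro n
      have : A n = ⋃ k, ⋃ (_ : 1 ≤ k), ⋃ (_ : k ≤ n), {ω | Z k ω = -1} := by
        ext ω
        simp only [hA_def, Set.mem_setOf_eq, Set.mem_iUnion]
        tauto
      rw [this]
      exact MeasurableSet.iUnion fun k => MeasurableSet.iUnion fun _ =>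
        MeasurableSet.iUnion fun _ => (hZmeas k) (measurableSet_singleton (-1))
    have hAnot : ∀ n ω, ω ∉ A n → 0 ≤ Z n ω := by
      intro n ω hω
      exact hZnonneg n ω (by simpa [hA_def, Set.mem_setOf_eq] using hω)
    -- the stopped exponential martingale
    set f : ℕ → Ω → ℝ := fun n ω => if ω ∈ A n then r⁻¹ else r ^ (Z n ω) with hf_def
    have hfmeas : ∀ n, Measurable (f n) := fun n =>
      Measurable.ite (hAmeas n) measurable_const (hzpow_meas.comp (hZmeas n))
    have hfbound : ∀ n ω, |f n ω| ≤ r⁻¹ := by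
      intro n ω
      simp only [hf_def]
      split
      · rw [abs_of_nonneg (inv_nonneg.mpr hr0.le)]
      · next hA' =>
        have h0 : 0 ≤ Z n ω := hAnot n ω hA'
        have hpos' : (0 : ℝ) < r ^ (Z n ω) := zpow_pos hr0 _
        rw [abs_of_nonneg hpos'.le]
        exact (hzle1 _ h0).trans hrinv
    -- expectation of each f n equals 1
    have hint_f : ∀ n, ∫ ω, f n ω ∂P = 1 := by
      intro n
      induction n with
      | zero =>
        have : f 0 = fun _ => (1 : ℝ) := by
          funext ω
          have hA0 : ω ∉ A 0 := by
            rintro ⟨k, hk1, hk2, -⟩; omega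
          simp only [hf_def, if_neg hA0, hZ]
          simp
        rw [this]; simp
      | succ n ih =>
        set g : Ω → ℝ := fun ω => if ω ∈ A n then 0 else r ^ (Z n ω) with hg_def
        set h : Ω → ℝ := fun ω => r ^ (X n ω) - 1 with hh_def
        have hgmeas : Measurable g :=
          Measurable.ite (hAmeas n) measurable_const (hzpow_meas.comp (hZmeas n))
        have hhmeas : Measurable h := (hzpow_meas.comp (hmeas n)).sub measurable_const
        have hgbound : ∀ ω, |g ω| ≤ 1 := by
          intro ω
          simp only [hg_def]
          split
          · simp
          · next hA' =>
            rw [abs_of_nonneg (zpow_pos hr0 _).le]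
            exact hzle1 _ (hAnot n ω hA')
        have hhbound : ∀ ω, |h ω| ≤ r⁻¹ + 1 := by
          intro ω
          simp only [hh_def]
          rcases hval n ω with h' | h' | h' <;> rw [h']
          · rw [zpow_neg_one]
            rw [abs_of_nonneg (by linarith)]
            linarith
          · simp only [zpow_zero, sub_self, abs_zero]
            positivity
          · rw [zpow_one, abs_of_nonpos (by linarith)]
            linarith
        have hgint : Integrable g P := hbint g hgmeas 1 hgbound
        have hhint : Integrable h P := hbint h hhmeas (r⁻¹ + 1) hhbound
        -- decomposition f (n+1) = f n + g * h
        have hdecomp : ∀ ω, f (n + 1) ω = f n ω + g ω * h ω := by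
          intro ω
          by_cases hA' : ω ∈ A n
          · have hA'' : ω ∈ A (n + 1) := by
              rcases hA' with ⟨k, hk1, hk2, hk3⟩
              exact ⟨k, hk1, hk2.trans (Nat.le_succ n), hk3⟩
            simp [hf_def, hg_def, hA', hA'']
          · have hZsucc : Z (n + 1) ω = Z n ω + X n ω := by
              rw [hZ, hZ, Finset.sum_range_succ]
            have hf1 : f (n + 1) ω = r ^ (Z (n + 1) ω) := by
              by_cases hA'' : ω ∈ A (n + 1)
              · obtain ⟨k, hk1, hk2, hk3⟩ := hA''
                have hk : k = n + 1 := by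
                  by_contra hne
                  exact hA' ⟨k, hk1, by omega, hk3⟩
                subst hk
                have : ω ∈ A (n + 1) := ⟨n + 1, by omega, le_rfl, hk3⟩
                simp only [hf_def, if_pos this, hk3, zpow_neg_one]
              · simp only [hf_def, if_neg hA'']
            rw [hf1, hZsucc, zpow_add₀ hr0.ne']
            simp only [hf_def, hg_def, hh_def, if_neg hA']
            ring
        -- independence of g and h
        have hVindep := hindep.indepFun_finset (Finset.range n) {n}
          (by simp) hmeas
        set G : ({ x // x ∈ Finset.range n } → ℤ) → ℝ := fun v =>
          if ∃ k, 1 ≤ k ∧ k ≤ n ∧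
              (∑ i ∈ Finset.range k, (if hi : i ∈ Finset.range n then v ⟨i, hi⟩ else 0)) = -1
          then 0
          else r ^ (∑ i ∈ Finset.range n, (if hi : i ∈ Finset.range n then v ⟨i, hi⟩ else 0))
          with hG_def
        set H : ({ x // x ∈ ({n} : Finset ℕ) } → ℤ) → ℝ := fun v =>
          r ^ (v ⟨n, Finset.mem_singleton_self n⟩) - 1 with hH_def
        have hGmeas : Measurable G := measurable_of_countable _
        have hHmeas : Measurable H := measurable_of_countable _
        have hcompg : g = G ∘ (fun ω (i : { x // x ∈ Finset.range n }) => X i ω) := by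
          funext ω
          have hsum : ∀ k, k ≤ n →
              (∑ i ∈ Finset.range k,
                (if hi : i ∈ Finset.range n then X i ω else 0)) = Z k ω := by
            intro k hk
            rw [hZ]
            refine Finset.sum_congr rfl fun i hi => ?_
            rw [dif_pos (Finset.mem_range.mpr
              (lt_of_lt_of_le (Finset.mem_range.mp hi) hk))]
          simp only [Function.comp_apply, hG_def, hg_def]
          by_cases hA' : ω ∈ A n
          · rw [if_pos hA', if_pos]
            obtain ⟨k, hk1, hk2, hk3⟩ := hA'
            exact ⟨k, hk1, hk2, by rw [hsum k hk2]; exact hk3⟩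
          · rw [if_neg hA', if_neg, hsum n le_rfl]
            rintro ⟨k, hk1, hk2, hk3⟩
            rw [hsum k hk2] at hk3
            exact hA' ⟨k, hk1, hk2, hk3⟩
        have hcomph : h = H ∘ (fun ω (i : { x // x ∈ ({n} : Finset ℕ) }) => X i ω) := by
          funext ω
          simp only [Function.comp_apply, hH_def, hh_def]
        have hindepgh : IndepFun g h P := by
          rw [hcompg, hcomph]
          exact hVindep.comp hGmeas hHmeas
        -- expectation of h is zero
        have hmeanh : ∫ ω, h ω ∂P = 0 := by
          have := rw_aux_expect P (X n) (hmeas n) (hval n)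
            (fun z => r ^ z - 1) (by simp)
          simp only [hh_def]
          rw [this, hPm n, hPp n]
          simp only [zpow_neg_one, zpow_one]
          rw [hr_def]
          field_simp
          ring
        -- conclude the martingale step
        have hfint : Integrable (f n) P := hbint (f n) (hfmeas n) r⁻¹ (hfbound n)
        have hghint : Integrable (fun ω => g ω * h ω) P := by
          refine hbint _ (hgmeas.mul hhmeas) (1 * (r⁻¹ + 1)) fun ω => ?_
          rw [abs_mul]
          exact mul_le_mul (hgbound ω) (hhbound ω) (abs_nonneg _) zero_le_one
        calc ∫ ω, f (n + 1) ω ∂P = ∫ ω, (f n ω + g ω * h ω) ∂P := by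
              refine integral_congr_ae (Filter.Eventually.of_forall fun ω => ?_)
              exact hdecomp ω
          _ = ∫ ω, f n ω ∂P + ∫ ω, g ω * h ω ∂P := integral_add hfint hghint
          _ = ∫ ω, f n ω ∂P + (∫ ω, g ω ∂P) * ∫ ω, h ω ∂P := by
              have hmul : ∫ ω, g ω * h ω ∂P = (∫ ω, g ω ∂P) * ∫ ω, h ω ∂P :=
                hindepgh.integral_fun_mul_eq_mul_integral hgint.aestronglyMeasurable
                  hhint.aestronglyMeasurable
              rw [hmul]
          _ = 1 := by rw [hmeanh, ih]; ring
    -- strong law of large numbers : Z n → ∞ a.s.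
    have hslln : ∀ᵐ ω ∂P, Tendsto (fun n => Z n ω) atTop atTop := by
      set Y : ℕ → Ω → ℝ := fun i ω => (X i ω : ℝ) with hY_def
      have hYmeas : ∀ i, Measurable (Y i) := fun i => hcast_meas.comp (hmeas i)
      have hYint : Integrable (Y 0) P := by
        refine hbint (Y 0) (hYmeas 0) 1 fun ω => ?_
        simp only [hY_def]
        rcases hval 0 ω with h' | h' | h' <;> rw [h'] <;> norm_num
      have hYindep : Pairwise (Function.onFun (IndepFun · · P) Y) := fun i j hij =>
        (hindep.indepFun hij).comp hcast_meas hcast_meas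
      have hYident : ∀ i, IdentDistrib (Y i) (Y 0) P P := fun i =>
        (hident i 0).comp hcast_meas
      have hmean : ∫ ω, Y 0 ω ∂P = b - a := by
        have := rw_aux_expect P (X 0) (hmeas 0) (hval 0) (fun z => (z : ℝ)) (by simp)
        simp only [hY_def]
        rw [this, hPm 0, hPp 0]
        push_cast
        ring
      have hSL := strong_law_ae Y hYint hYindep hYident
      rw [hmean] at hSL
      filter_upwards [hSL] with ω hω
      have hba : (0 : ℝ) < b - a := sub_pos.mpr hab
      have h1 : Tendsto
          (fun n : ℕ => ((n : ℝ)⁻¹ • ∑ i ∈ Finset.range n, Y i ω) * n) atTop atTop :=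
        Filter.Tendsto.pos_mul_atTop hba hω tendsto_natCast_atTop_atTop
      have h2 : Tendsto (fun n : ℕ => ((Z n ω : ℤ) : ℝ)) atTop atTop := by
        refine h1.congr' ?_
        filter_upwards [eventually_ge_atTop 1] with n hn
        have hn0 : (n : ℝ) ≠ 0 := Nat.cast_ne_zero.mpr (by omega)
        rw [smul_eq_mul, hZ]
        push_cast
        field_simp
        rfl
      exact tendsto_intCast_atTop_iff.mp h2
    -- the pointwise limit of the stopped process
    set L : Ω → ℝ := Hit.indicator (fun _ => r⁻¹) with hL_def
    have hlim : ∀ᵐ ω ∂P, Tendsto (fun n => f n ω) atTop (𝓝 (L ω)) := by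
      filter_upwards [hslln] with ω hω
      by_cases hHitω : ω ∈ Hit
      · have hLω : L ω = r⁻¹ := Set.indicator_of_mem hHitω _
        rw [hLω]
        obtain ⟨N, hN1, hNZ⟩ := hHitω
        have hc : Tendsto (fun _ : ℕ => r⁻¹) atTop (𝓝 r⁻¹) := tendsto_const_nhds
        refine Tendsto.congr' ?_ hc
        filter_upwards [eventually_ge_atTop N] with n hn
        have hmem : ω ∈ A n := ⟨N, hN1, hn, hNZ⟩
        simp [hf_def, hmem]
      · have hLω : L ω = 0 := Set.indicator_of_notMem hHitω _
        rw [hLω]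
        have hfA : ∀ n, f n ω = r ^ (Z n ω) := by
          intro n
          refine if_neg ?_
          rintro ⟨k, hk1, hk2, hk3⟩
          exact hHitω ⟨k, hk1, hk3⟩
        have htoNat : Tendsto (fun n => (Z n ω).toNat) atTop atTop := by
          refine tendsto_atTop.mpr fun m => ?_
          filter_upwards [hω.eventually_ge_atTop (m : ℤ)] with n hn
          omega
        have h1 : Tendsto (fun n => r ^ (Z n ω).toNat) atTop (𝓝 0) :=
          (tendsto_pow_atTop_nhds_zero_of_lt_one hr0.le hr1).comp htoNat
        refine Tendsto.congr' ?_ h1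
        filter_upwards [hω.eventually_ge_atTop 0] with n hn
        rw [hfA, ← zpow_natCast, Int.toNat_of_nonneg hn]
    -- dominated convergence
    have hDCT := tendsto_integral_of_dominated_convergence (μ := P)
      (F := fun n ω => f n ω) (f := L) (fun _ => r⁻¹)
      (fun n => (hfmeas n).aestronglyMeasurable) (integrable_const _)
      (fun n => Filter.Eventually.of_forall fun ω => by
        simpa using hfbound n ω) hlim
    have hDCT1 : Tendsto (fun _ : ℕ => (1 : ℝ)) atTop (𝓝 (∫ ω, L ω ∂P)) := by
      refine hDCT.congr fun n => ?_
      exact hint_f n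
    have hintL : ∫ ω, L ω ∂P = 1 :=
      tendsto_nhds_unique hDCT1 tendsto_const_nhds
    have hintL2 : ∫ ω, L ω ∂P = (P Hit).toReal * r⁻¹ := by
      rw [hL_def, integral_indicator_const _ hHitmeas, smul_eq_mul]
      rfl
    have hPHit : (P Hit).toReal = r := by
      have h := hintL2.symm.trans hintL
      have : (P Hit).toReal = ((P Hit).toReal * r⁻¹) * r := by
        field_simp
      rw [this, h, one_mul]
    have hfinHit : P Hit ≠ ⊤ := (measure_lt_top P _).ne
    have hfinal : P Hit = ENNReal.ofReal r := by
      rw [← ENNReal.ofReal_toReal hfinHit, hPHit]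
    rw [hfinal, hr_def, ENNReal.ofReal_div_of_pos hb, ha_def, hb_def,
      ENNReal.ofReal_toReal hfinm, ENNReal.ofReal_toReal hfinp]
end

section
/- Let (X_i)_{i≥1} be independent, identically distributed random variables on a probability space (Ω,ℙ), each taking values in {-1,0,1}, and set p₊ = ℙ(X_i = 1), p₋ = ℙ(X_i = -1). Assume p₊ > p₋. Let Z_0 = 0 and Z_n = X_1 + ⋯ + X_n. Then almost surely there exists n₀ ≥ 0 such that Z_{n₀} = 0 and Z_n > 0 for every n > n₀; that is, ℙ(∃ n₀ ≥ 0, Z_{n₀} = 0 and ∀ n > n₀, Z_n > 0) = 1. -/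
open MeasureTheory ProbabilityTheory Filter
open scoped ENNReal

/-- For an i.i.d. random walk with steps in `{-1,0,1}` and `p₊ > p₋`,
almost surely there is a time `n₀` with `Z_{n₀} = 0` after which the walk stays positive.
(Steps are indexed by `ℕ`, with `X i` the `(i+1)`-st step.) -/
theorem rw_eventually_positive
    {Ω : Type*} [MeasurableSpace Ω] (P : Measure Ω) [IsProbabilityMeasure P]
    (X : ℕ → Ω → ℤ) (hmeas : ∀ i, Measurable (X i))
    (hval : ∀ i ω, X i ω = -1 ∨ X i ω = 0 ∨ X i ω = 1)
    (hindep : iIndepFun X P)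
    (hident : ∀ i j, IdentDistrib (X i) (X j) P P)
    (pplus pminus : ℝ≥0∞)
    (hpplus : pplus = P {ω | X 0 ω = 1})
    (hpminus : pminus = P {ω | X 0 ω = -1})
    (hlt : pminus < pplus)
    (Z : ℕ → Ω → ℤ) (hZ : ∀ n ω, Z n ω = ∑ i ∈ Finset.range n, X i ω) :
    P {ω | ∃ n₀, Z n₀ ω = 0 ∧ ∀ n, n₀ < n → 0 < Z n ω} = 1 := by
  classical
  have hcast : Measurable (fun z : ℤ => (z : ℝ)) := measurable_from_top
  set Y : ℕ → Ω → ℝ := fun i ω => (X i ω : ℝ) with hYdef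
  have hYmeas : ∀ i, Measurable (Y i) := fun i => hcast.comp (hmeas i)
  set A := {ω | X 0 ω = 1} with hA
  set B := {ω | X 0 ω = -1} with hB
  have hAm : MeasurableSet A := hmeas 0 (measurableSet_singleton 1)
  have hBm : MeasurableSet B := hmeas 0 (measurableSet_singleton (-1))
  -- integrability
  have hYint : Integrable (Y 0) P := by
    refine ⟨(hYmeas 0).aestronglyMeasurable, ?_⟩
    apply HasFiniteIntegral.of_bounded (C := 1)
    filter_upwards with ω
    rcases hval 0 ω with h | h | h <;> simp [hYdef, h]
  -- the mean is positive
  have hrep : Y 0 = fun ω =>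
      A.indicator (fun _ => (1 : ℝ)) ω - B.indicator (fun _ => (1 : ℝ)) ω := by
    funext ω
    rcases hval 0 ω with h | h | h <;>
      simp [hYdef, Set.indicator_apply, hA, hB, h]
  have hmean : ∫ ω, Y 0 ω ∂P = (P A).toReal - (P B).toReal := by
    have hiA : Integrable (A.indicator (fun _ => (1 : ℝ))) P :=
      (integrable_const (1 : ℝ)).indicator hAm
    have hiB : Integrable (B.indicator (fun _ => (1 : ℝ))) P :=
      (integrable_const (1 : ℝ)).indicator hBm
    rw [hrep]
    rw [integral_sub hiA hiB]
    have h1 : ∫ ω, A.indicator (fun _ => (1 : ℝ)) ω ∂P = (P A).toReal :=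
      integral_indicator_one hAm
    have h2 : ∫ ω, B.indicator (fun _ => (1 : ℝ)) ω ∂P = (P B).toReal :=
      integral_indicator_one hBm
    rw [h1, h2]
  have hmeanpos : 0 < ∫ ω, Y 0 ω ∂P := by
    rw [hmean, sub_pos]
    rw [hpplus, hpminus] at hlt
    exact ENNReal.toReal_lt_toReal (measure_ne_top P B) (measure_ne_top P A) |>.mpr hlt
  -- strong law
  have hpair : Pairwise (Function.onFun (IndepFun · · P) Y) := fun i j hij =>
    (hindep.indepFun hij).comp hcast hcast
  have hid : ∀ i, IdentDistrib (Y i) (Y 0) P P := fun i => (hident i 0).comp hcast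
  have hslln := strong_law_ae_real Y hYint hpair hid
  -- the a.e. statement
  have hae : ∀ᵐ ω ∂P, ∃ n₀, Z n₀ ω = 0 ∧ ∀ n, n₀ < n → 0 < Z n ω := by
    filter_upwards [hslln] with ω hω
    have hev : ∀ᶠ n : ℕ in atTop, 0 < (∑ i ∈ Finset.range n, Y i ω) / n :=
      hω.eventually (eventually_gt_nhds hmeanpos)
    obtain ⟨N, hN⟩ := eventually_atTop.1 hev
    set M := max N 1 with hM
    have hpos : ∀ n, M ≤ n → 0 < Z n ω := by
      intro n hn
      have h1 := hN n (le_trans (le_max_left _ _) hn)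
      have hn0 : (0 : ℝ) < n := by
        have : 1 ≤ n := le_trans (le_max_right _ _) hn
        exact_mod_cast this
      have hs : (0 : ℝ) < ∑ i ∈ Finset.range n, Y i ω := by
        by_contra h
        push_neg at h
        have : (∑ i ∈ Finset.range n, Y i ω) / n ≤ 0 := div_nonpos_of_nonpos_of_nonneg h hn0.le
        linarith
      have : (0 : ℝ) < (Z n ω : ℝ) := by
        rw [hZ]
        push_cast
        exact hs
      exact_mod_cast this
    set p : ℕ → Prop := fun n => Z n ω ≤ 0 with hp
    set n₀ := Nat.findGreatest p M with hn₀
    have hZ0 : p 0 := by simp [hp, hZ]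
    have hspec : Z n₀ ω ≤ 0 := Nat.findGreatest_spec (Nat.zero_le M) hZ0
    have hgt : ∀ n, n₀ < n → 0 < Z n ω := by
      intro n hn
      by_cases hnM : n ≤ M
      · by_contra h
        exact Nat.findGreatest_is_greatest hn hnM (not_lt.1 h)
      · exact hpos n (le_of_not_ge hnM)
    refine ⟨n₀, ?_, hgt⟩
    have h1 : 0 < Z (n₀ + 1) ω := hgt _ (lt_add_one _)
    have h2 : Z (n₀ + 1) ω = Z n₀ ω + X n₀ ω := by
      rw [hZ, hZ, Finset.sum_range_succ]
    rcases hval n₀ ω with h | h | h <;> omega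
  -- conclude
  refine le_antisymm prob_le_one ?_
  set E := {ω | ∃ n₀, Z n₀ ω = 0 ∧ ∀ n, n₀ < n → 0 < Z n ω} with hE
  have h0 : P Eᶜ = 0 := by
    rw [ae_iff] at hae
    exact measure_mono_null (fun ω hω => hω) hae
  calc (1 : ℝ≥0∞) = P Set.univ := measure_univ.symm
    _ = P (E ∪ Eᶜ) := by rw [Set.union_compl_self]
    _ ≤ P E + P Eᶜ := measure_union_le E Eᶜ
    _ = P E := by rw [h0, add_zero]
end

section
/- Let m, n be nonzero integers and p a prime number with v_p(m) > v_p(n), where v_p denotes the p-adic valuation of the absolute value. Let r ∈ ℕ and ε_1, …, ε_r ∈ {-1, 0, 1}; for 0 ≤ i ≤ r set h_i = ε_1 + ⋯ + ε_i (so h_0 = 0), and assume h_i ≥ 0 for all i. Let N_0, N_1, …, N_r be positive integers such that v_p(N_0) > v_p(m) and such that for each 1 ≤ i ≤ r: if ε_i = 0 then N_i = N_{i-1}; if ε_i = 1 then N_{i-1}/gcd(N_{i-1}, |n|) = N_i/gcd(N_i, |m|); and if ε_i = -1 then N_{i-1}/gcd(N_{i-1}, |m|) = N_i/gcd(N_i,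 |n|). Then for every 0 ≤ i ≤ r one has v_p(N_i) = h_i · (v_p(m) − v_p(n)) + v_p(N_0). -/
/-!
Along a positive edge the Transfer Equation cancels `gcd(N, |n|)` on one side and `gcd(M, |m|)`
on the other. As long as `v_p(N)` exceeds `v_p(m)` (hence also `v_p(n)`), the left side has
valuation `v_p(N) - v_p(n) > 0`, which forces `v_p(M) > v_p(m)` and
`v_p(M) = v_p(N) - v_p(n) + v_p(m)`; negative edges behave symmetrically. So `v_p(N_i)` moves by
`ε_i (v_p(m) - v_p(n))` at each step, and `h_i ≥ 0` keeps it above `v_p(N_0) > v_p(m)`, so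
that the induction can go on.
-/

namespace padicValNat

variable {p : ℕ} [Fact p.Prime]

theorem gcd {a b : ℕ} (ha : a ≠ 0) (hb : b ≠ 0) :
    padicValNat p (Nat.gcd a b) = min (padicValNat p a) (padicValNat p b) := by
  have hp : p.Prime := Fact.out
  simp only [← Nat.factorization_def _ hp, Nat.factorization_gcd ha hb, Finsupp.inf_apply]

theorem div_gcd (a : ℕ) {b : ℕ} (hb : b ≠ 0) :
    padicValNat p (a / Nat.gcd a b) = padicValNat p a - padicValNat p b := by
  rcases eq_or_ne a 0 with rfl | ha
  · simp
  rw [padicValNat.div_of_dvd (Nat.gcd_dvd_left a b), padicValNat.gcd ha hb]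
  omega

theorem add_eq_add_of_div_gcd_eq {a b k l : ℕ} (hk : k ≠ 0) (hl : l ≠ 0)
    (hka : padicValNat p k < padicValNat p a)
    (heq : a / Nat.gcd a k = b / Nat.gcd b l) :
    padicValNat p b + padicValNat p k = padicValNat p a + padicValNat p l := by
  have hval := congrArg (padicValNat p) heq
  rw [div_gcd a hk, div_gcd b hl] at hval
  omega

end padicValNat

theorem padicValNat_transfer_step {p : ℕ} [Fact p.Prime] {m n a b : ℕ} (hm : m ≠ 0) (hn : n ≠ 0)
    (hval : padicValNat p n < padicValNat p m) (ha : padicValNat p m < padicValNat p a)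
    {e : ℤ} (he : e = -1 ∨ e = 0 ∨ e = 1)
    (hstep : (e = 0 → b = a) ∧ (e = 1 → a / Nat.gcd a n = b / Nat.gcd b m) ∧
      (e = -1 → a / Nat.gcd a m = b / Nat.gcd b n)) :
    (padicValNat p b : ℤ) = padicValNat p a + e * (padicValNat p m - padicValNat p n) := by
  obtain ⟨hzero, hpos, hneg⟩ := hstep
  rcases he with rfl | rfl | rfl
  · have := padicValNat.add_eq_add_of_div_gcd_eq hm hn ha (hneg rfl)
    omega
  · simp [hzero rfl]
  · have := padicValNat.add_eq_add_of_div_gcd_eq hn hm (hval.trans ha) (hpos rfl)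
    omega

theorem transfer_valuation_general
    (m n : ℤ) (hm : m ≠ 0) (hn : n ≠ 0) (p : ℕ) (hp : p.Prime)
    (hval : padicValNat p n.natAbs < padicValNat p m.natAbs)
    (r : ℕ) (ε : ℕ → ℤ)
    (hε : ∀ i, 1 ≤ i → i ≤ r → ε i = -1 ∨ ε i = 0 ∨ ε i = 1)
    (h : ℕ → ℤ) (hh : ∀ i, h i = ∑ j ∈ Finset.Icc 1 i, ε j)
    (hnonneg : ∀ i ≤ r, 0 ≤ h i)
    (N : ℕ → ℕ)
    (hN0 : padicValNat p m.natAbs < padicValNat p (N 0))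
    (hstep : ∀ i, 1 ≤ i → i ≤ r →
      (ε i = 0 → N i = N (i - 1)) ∧
      (ε i = 1 → N (i - 1) / Nat.gcd (N (i - 1)) n.natAbs
               = N i / Nat.gcd (N i) m.natAbs) ∧
      (ε i = -1 → N (i - 1) / Nat.gcd (N (i - 1)) m.natAbs
                = N i / Nat.gcd (N i) n.natAbs)) :
    ∀ i ≤ r, (padicValNat p (N i) : ℤ)
      = h i * ((padicValNat p m.natAbs : ℤ) - (padicValNat p n.natAbs : ℤ))
        + (padicValNat p (N 0) : ℤ) := by
  have := Fact.mk hp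
  intro i
  induction i with
  | zero => simp [hh]
  | succ i ih =>
    intro hi
    have hNi := ih (by omega)
    have hgap : (0 : ℤ) ≤ h i * (padicValNat p m.natAbs - padicValNat p n.natAbs) :=
      mul_nonneg (hnonneg i (by omega)) (by omega)
    have hbig : padicValNat p m.natAbs < padicValNat p (N i) := by omega
    have hh_succ : h (i + 1) = h i + ε (i + 1) := by
      rw [hh, hh, Finset.sum_Icc_succ_top (by omega)]
    have hstep' := hstep (i + 1) (by omega) hi
    rw [Nat.add_sub_cancel] at hstep'
    rw [padicValNat_transfer_step (Int.natAbs_ne_zero.mpr hm) (Int.natAbs_ne_zero.mpr hn) hval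
      hbig (hε (i + 1) (by omega) hi) hstep', hNi, hh_succ]
    ring

/-- Arithmetic propagation of `p`-adic valuations along the Transfer
Equation of `(m,n)`-graphs: if `v_p(m) > v_p(n)`, the partial sums `h_i` of the step
signs `ε_i` stay nonnegative, and `v_p(N_0) > v_p(m)`, then
`v_p(N_i) = h_i (v_p(m) - v_p(n)) + v_p(N_0)` for all `0 ≤ i ≤ r`.
Here `v_p(k)` is `padicValNat p |k|`. -/
theorem transfer_valuation
    (m n : ℤ) (hm : m ≠ 0) (hn : n ≠ 0) (p : ℕ) (hp : p.Prime)
    (hval : padicValNat p n.natAbs < padicValNat p m.natAbs)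
    (r : ℕ) (ε : ℕ → ℤ)
    (hε : ∀ i, 1 ≤ i → i ≤ r → ε i = -1 ∨ ε i = 0 ∨ ε i = 1)
    (h : ℕ → ℤ) (hh : ∀ i, h i = ∑ j ∈ Finset.Icc 1 i, ε j)
    (hnonneg : ∀ i ≤ r, 0 ≤ h i)
    (N : ℕ → ℕ) (hNpos : ∀ i ≤ r, 0 < N i)
    (hN0 : padicValNat p m.natAbs < padicValNat p (N 0))
    (hstep : ∀ i, 1 ≤ i → i ≤ r →
      (ε i = 0 → N i = N (i - 1)) ∧
      (ε i = 1 → N (i - 1) / Nat.gcd (N (i - 1)) n.natAbs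
               = N i / Nat.gcd (N i) m.natAbs) ∧
      (ε i = -1 → N (i - 1) / Nat.gcd (N (i - 1)) m.natAbs
                = N i / Nat.gcd (N i) n.natAbs)) :
    ∀ i ≤ r, (padicValNat p (N i) : ℤ)
      = h i * ((padicValNat p m.natAbs : ℤ) - (padicValNat p n.natAbs : ℤ))
        + (padicValNat p (N 0) : ℤ) :=
  transfer_valuation_general m n hm hn p hp hval r ε hε h hh hnonneg N hN0 hstep
end

section
/- Let m, n be integers with min(|m|,|n|) > 1, let Γ = BS(m,n) = ⟨b,t ∣ t b^m t⁻¹ = b^n⟩, and let p be a prime with v_p(m) > v_p(n). Let N be a positive integer with v_p(N) > v_p(m), and let Λ ≤ Γ be a subgroup with Λ ∩ ⟨b⟩ = ⟨b^N⟩. Let g_1, …, g_k ∈ {b, b⁻¹, t, t⁻¹} and for 1 ≤ i ≤ k set h_i⁺ = #{j ≤ i : g_j = t} and h_i⁻ = #{j ≤ i : g_j = t⁻¹}; assume h_i⁺ ≥ h_i⁻ for all 1 ≤ i ≤ k. Set s_k = g_1 ⋯ g_k ∈ Γ. Then there exists a positive integer N_k such that s_k⁻¹ Λ s_k ∩ ⟨b⟩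 = ⟨b^{N_k}⟩ and v_p(N_k) = (h_k⁺ − h_k⁻)·(v_p(m) − v_p(n)) + v_p(N). -/
open MeasureTheory ProbabilityTheory Filter
open scoped ENNReal

/-- The single defining relation of the Baumslag–Solitar group `BS(m,n)`:
`t b^m t⁻¹ b^{-n}` in the free group on `Bool` (with `false ↦ b`, `true ↦ t`). -/
def BSRels (m n : ℤ) : Set (FreeGroup Bool) :=
  {FreeGroup.of true * FreeGroup.of false ^ m * (FreeGroup.of true)⁻¹ * FreeGroup.of false ^ (-n)}

/-- The Baumslag–Solitar group `BS(m,n) = ⟨b, t ∣ t b^m t⁻¹ = b^n⟩`. -/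
abbrev BS (m n : ℤ) : Type := PresentedGroup (BSRels m n)

/-- The generator `b` of `BS(m,n)`. -/
def BS.b (m n : ℤ) : BS m n := PresentedGroup.of false

/-- The generator `t` of `BS(m,n)`. -/
def BS.t (m n : ℤ) : BS m n := PresentedGroup.of true

/-- The four standard letters `b, b⁻¹, t, t⁻¹` of `BS(m,n)`, encoded by a pair of booleans:
the first component tells whether the letter is a stable letter (`t^{±1}`), the second whether
it is inverted. -/
def BS.letter (m n : ℤ) : Bool × Bool → BS m n
  | (false, false) => BS.b m n
  | (false, true)  => (BS.b m n)⁻¹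
  | (true, false)  => BS.t m n
  | (true, true)   => (BS.t m n)⁻¹

/-- The height of an element of `BS(m,n)`: the minimal number of letters `t^{±1}` in a word
over `{b, b⁻¹, t, t⁻¹}` representing it. -/
noncomputable def BS.height (m n : ℤ) (g : BS m n) : ℕ :=
  sInf {r : ℕ | ∃ w : List (Bool × Bool),
    (w.map (BS.letter m n)).prod = g ∧ r = (w.filter (fun x => x.1)).length}

instance (m n : ℤ) : MeasurableSpace (BS m n) := ⊤

instance (m n : ℤ) : MeasurableSingletonClass (BS m n) :=
  ⟨fun _ => MeasurableSpace.measurableSet_top⟩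

/-! ### Auxiliary lemmas -/


section Aux

lemma BS.relation (m n : ℤ) :
    BS.t m n * BS.b m n ^ m * (BS.t m n)⁻¹ = BS.b m n ^ n := by
  have h : (PresentedGroup.mk (BSRels m n))
      (FreeGroup.of true * FreeGroup.of false ^ m * (FreeGroup.of true)⁻¹
        * FreeGroup.of false ^ (-n)) = 1 := by
    apply (QuotientGroup.eq_one_iff _).2
    exact Subgroup.subset_normalClosure rfl
  simp only [map_mul, map_zpow, map_inv] at h
  have h' := mul_eq_one_iff_eq_inv.1 h
  simp only [BS.b, BS.t, PresentedGroup.of]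
  rw [h', ← zpow_neg, neg_neg]

lemma BS.rel_zpow (m n : ℤ) (r : ℤ) :
    BS.t m n * BS.b m n ^ (m * r) * (BS.t m n)⁻¹ = BS.b m n ^ (n * r) := by
  calc BS.t m n * BS.b m n ^ (m * r) * (BS.t m n)⁻¹
      = (BS.t m n * BS.b m n ^ m * (BS.t m n)⁻¹) ^ r := by rw [conj_zpow, ← zpow_mul]
    _ = (BS.b m n ^ n) ^ r := by rw [BS.relation]
    _ = BS.b m n ^ (n * r) := by rw [← zpow_mul]

lemma BS.rel_zpow' (m n : ℤ) (r : ℤ) :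
    (BS.t m n)⁻¹ * BS.b m n ^ (n * r) * ((BS.t m n)⁻¹)⁻¹ = BS.b m n ^ (m * r) := by
  rw [← BS.rel_zpow m n r]
  group

lemma addRight_one_zpow (r : ℤ) : ((Equiv.addRight (1:ℚ)) ^ r) = Equiv.addRight (r:ℚ) := by
  induction r using Int.induction_on with
  | zero => ext x; simp
  | succ k ih => rw [zpow_add_one, ih]; ext x; simp [Equiv.Perm.mul_apply]; ring
  | pred k ih => rw [zpow_sub_one, ih]; ext x; simp [Equiv.Perm.mul_apply]; ring

lemma BS.b_zpow_injective (m n : ℤ) (hm : m ≠ 0) (hn : n ≠ 0) :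
    Function.Injective (fun r : ℤ => BS.b m n ^ r) := by
  have hmq : (m:ℚ) ≠ 0 := Int.cast_ne_zero.2 hm
  have hnq : (n:ℚ) ≠ 0 := Int.cast_ne_zero.2 hn
  have ha : (n:ℚ)/m ≠ 0 := div_ne_zero hnq hmq
  set f : Bool → Equiv.Perm ℚ := fun x =>
    match x with
    | true => Equiv.mulRight₀ ((n:ℚ)/m) ha
    | false => Equiv.addRight (1:ℚ) with hf
  have hrels : ∀ r ∈ BSRels m n, FreeGroup.lift f r = 1 := by
    intro r hr
    rcases hr with rfl
    simp only [map_mul, map_zpow, map_inv, FreeGroup.lift_apply_of, hf]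
    ext x
    simp only [Equiv.Perm.mul_apply, addRight_one_zpow, Equiv.Perm.one_apply,
      Equiv.coe_addRight]
    rw [show ((Equiv.mulRight₀ ((n:ℚ)/m) ha)⁻¹ : Equiv.Perm ℚ)
        = (Equiv.mulRight₀ ((n:ℚ)/m) ha).symm from rfl]
    simp only [Equiv.mulRight₀, Equiv.coe_fn_mk, Equiv.coe_fn_symm_mk, Units.mulRight_symm,
      Units.mulRight_apply, Units.val_inv_eq_inv_val, Units.val_mk0]
    field_simp
    push_cast
    ring
  set φ := PresentedGroup.toGroup hrels
  intro r s hrs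
  have h1 : ∀ r : ℤ, φ (BS.b m n ^ r) 0 = r := by
    intro r
    have : φ (BS.b m n) = Equiv.addRight (1:ℚ) :=
      PresentedGroup.toGroup.of hrels (x := false)
    rw [map_zpow, this, addRight_one_zpow]
    simp
  have := congrArg (fun y => φ y 0) hrs
  simp only [h1] at this
  exact_mod_cast this

/-- `p`-adic valuation of an integer, as the valuation of its absolute value. -/
def vI (p : ℕ) (a : ℤ) : ℕ := padicValNat p a.natAbs

lemma vI_mul [hp : Fact p.Prime] (a b : ℤ) (ha : a ≠ 0) (hb : b ≠ 0) :
    vI p (a * b) = vI p a + vI p b := by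
  unfold vI
  rw [Int.natAbs_mul]
  exact padicValNat.mul (Int.natAbs_ne_zero.2 ha) (Int.natAbs_ne_zero.2 hb)

lemma vI_dvd_le [hp : Fact p.Prime] {a b : ℤ} (hb : b ≠ 0) (h : a ∣ b) :
    vI p a ≤ vI p b := by
  obtain ⟨c, rfl⟩ := h
  have ha : a ≠ 0 := fun h' => hb (by simp [h'])
  have hc : c ≠ 0 := fun h' => hb (by simp [h'])
  rw [vI_mul a c ha hc]; omega

lemma pow_vI_dvd (p : ℕ) (a : ℤ) : (p:ℤ) ^ (vI p a) ∣ a := by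
  have h1 : (p:ℕ) ^ (vI p a) ∣ a.natAbs := pow_padicValNat_dvd
  have h2 : ((p ^ (vI p a) : ℕ) : ℤ) ∣ (a.natAbs : ℤ) := Int.natCast_dvd_natCast.2 h1
  push_cast at h2
  exact h2.trans (by rw [Int.abs_eq_natAbs] at *; exact Int.natAbs_dvd.2 dvd_rfl)

lemma vI_pow_mul [hp : Fact p.Prime] (e : ℕ) (x : ℤ) (hx : x ≠ 0) :
    vI p ((p:ℤ) ^ e * x) = e + vI p x := by
  have hpe : ((p:ℤ) ^ e) ≠ 0 := by
    have := hp.out.pos; positivity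
  rw [vI_mul _ _ hpe hx]
  congr 1
  unfold vI
  rw [Int.natAbs_pow]
  simp only [Int.natAbs_natCast]
  exact padicValNat.prime_pow e

lemma mem_map_conj_iff {G : Type*} [Group G] (v y : G) (Λ : Subgroup G) :
    y ∈ Subgroup.map (MulAut.conj v).toMonoidHom Λ ↔ v⁻¹ * y * v ∈ Λ := by
  rw [show (MulAut.conj v).toMonoidHom = ((MulAut.conj v) : G ≃* G).toMonoidHom from rfl]
  rw [Subgroup.mem_map_equiv]
  simp [MulAut.conj_symm_apply]

end Aux
section Step

variable {p : ℕ} [hp : Fact p.Prime]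

/-- membership of powers of `b` in a subgroup whose intersection with `⟨b⟩` is `⟨b^M⟩`. -/
lemma BS.pow_mem_iff (m n : ℤ) (hm : m ≠ 0) (hn : n ≠ 0) (M : ℕ)
    (Λ' : Subgroup (BS m n))
    (hΛ' : Λ' ⊓ Subgroup.zpowers (BS.b m n) = Subgroup.zpowers (BS.b m n ^ M))
    (r : ℤ) : BS.b m n ^ r ∈ Λ' ↔ (M:ℤ) ∣ r := by
  have binj := BS.b_zpow_injective m n hm hn
  constructor
  · intro h
    have h2 : BS.b m n ^ r ∈ Λ' ⊓ Subgroup.zpowers (BS.b m n) :=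
      ⟨h, ⟨r, rfl⟩⟩
    rw [hΛ', Subgroup.mem_zpowers_iff] at h2
    obtain ⟨s, hs⟩ := h2
    rw [← zpow_natCast, ← zpow_mul] at hs
    exact ⟨s, (binj hs).symm⟩
  · rintro ⟨s, rfl⟩
    have : BS.b m n ^ ((M:ℤ) * s) ∈ Subgroup.zpowers (BS.b m n ^ M) := by
      rw [Subgroup.mem_zpowers_iff]
      exact ⟨s, by rw [← zpow_natCast, ← zpow_mul]⟩
    rw [← hΛ'] at this
    exact this.1

/-- The key step lemma: conjugating by a letter `u` satisfying
`u b^{ar} u⁻¹ = b^{cr}` transforms `⟨b^M⟩` into `⟨b^{M'}⟩` with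
`v_p(M') = v_p(M) + v_p(a) - v_p(c)`. -/
lemma BS.step (m n : ℤ) (hm : m ≠ 0) (hn : n ≠ 0)
    (a c : ℤ) (ha : a ≠ 0) (hc : c ≠ 0)
    (u : BS m n) (hrel : ∀ r : ℤ, u * BS.b m n ^ (a * r) * u⁻¹ = BS.b m n ^ (c * r))
    (M : ℕ) (hM : 0 < M) (hMc : vI p c < padicValNat p M)
    (Λ' : Subgroup (BS m n))
    (hΛ' : Λ' ⊓ Subgroup.zpowers (BS.b m n) = Subgroup.zpowers (BS.b m n ^ M)) :
    ∃ M' : ℕ, 0 < M' ∧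
      Subgroup.map (MulAut.conj u⁻¹).toMonoidHom Λ' ⊓ Subgroup.zpowers (BS.b m n)
        = Subgroup.zpowers (BS.b m n ^ M') ∧
      padicValNat p M' + vI p c = padicValNat p M + vI p a := by
  have binj := BS.b_zpow_injective m n hm hn
  have hMz : (M:ℤ) ≠ 0 := by exact_mod_cast hM.ne'
  have hbM := BS.pow_mem_iff m n hm hn M Λ' hΛ'
  have hvM : vI p (M:ℤ) = padicValNat p M := by unfold vI; simp
  -- the subgroup of exponents
  set D : AddSubgroup ℤ :=
    { carrier := {r : ℤ | u * BS.b m n ^ r * u⁻¹ ∈ Λ'}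
      zero_mem' := by simpa using one_mem Λ'
      add_mem' := by
        intro x y hx hy
        simp only [Set.mem_setOf_eq] at hx hy ⊢
        have h : u * BS.b m n ^ (x + y) * u⁻¹
            = (u * BS.b m n ^ x * u⁻¹) * (u * BS.b m n ^ y * u⁻¹) := by
          rw [zpow_add]; group
        rw [h]
        exact mul_mem hx hy
      neg_mem' := by
        intro x hx
        simp only [Set.mem_setOf_eq] at hx ⊢
        have h : u * BS.b m n ^ (-x) * u⁻¹ = (u * BS.b m n ^ x * u⁻¹)⁻¹ := by
          rw [zpow_neg]; group
        rw [h]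
        exact inv_mem hx } with hDdef
  have hDmem : ∀ r : ℤ, r ∈ D ↔ u * BS.b m n ^ r * u⁻¹ ∈ Λ' := fun r => Iff.rfl
  obtain ⟨d, hD⟩ := Int.subgroup_cyclic D
  have hDd : ∀ r : ℤ, r ∈ D ↔ d ∣ r := by
    intro r
    rw [hD, ← AddSubgroup.zmultiples_eq_closure, Int.mem_zmultiples_iff]
  -- decompositions along powers of p
  set vc := vI p c with hvc
  set va := vI p a with hva
  obtain ⟨c₀, hc₀⟩ : ((p:ℤ)^vc) ∣ c := pow_vI_dvd p c
  obtain ⟨M₀, hM₀⟩ : ((p:ℤ)^vc) ∣ (M:ℤ) := by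
    refine dvd_trans (pow_dvd_pow (p:ℤ) ?_) (pow_vI_dvd p (M:ℤ))
    rw [hvM]; exact hMc.le
  have hc₀0 : c₀ ≠ 0 := fun h => hc (by simp [hc₀, h])
  have hM₀0 : M₀ ≠ 0 := fun h => hMz (by simp [hM₀, h])
  have hvc₀ : vI p c₀ = 0 := by
    have := vI_pow_mul (p := p) vc c₀ hc₀0
    rw [← hc₀] at this
    omega
  have hvM₀ : vc + vI p M₀ = padicValNat p M := by
    have := vI_pow_mul (p := p) vc M₀ hM₀0
    rw [← hM₀] at this
    rw [← hvM, this]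
  -- the upper-bound witness r₀ = a * (M₀ * c₀) ∈ D
  have hr0mem : a * (M₀ * c₀) ∈ D := by
    rw [hDmem, hrel]
    have : c * (M₀ * c₀) = (M:ℤ) * (c₀ * c₀) := by rw [hc₀, hM₀]; ring
    rw [this, hbM]
    exact ⟨c₀ * c₀, rfl⟩
  have hr00 : a * (M₀ * c₀) ≠ 0 := by
    simp only [mul_ne_zero_iff]
    exact ⟨ha, hM₀0, hc₀0⟩
  have hd0 : d ≠ 0 := by
    rintro rfl
    exact hr00 (by simpa using (hDd _).1 hr0mem)
  -- upper bound
  have hupper : vI p d + vc ≤ padicValNat p M + va := by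
    have h1 : vI p d ≤ vI p (a * (M₀ * c₀)) := vI_dvd_le hr00 ((hDd _).1 hr0mem)
    rw [vI_mul a _ ha (mul_ne_zero hM₀0 hc₀0), vI_mul M₀ c₀ hM₀0 hc₀0, hvc₀] at h1
    omega
  -- lower bound
  set e := min (vI p d) va with he
  obtain ⟨a₁, ha₁⟩ : ((p:ℤ)^e) ∣ a := (pow_dvd_pow (p:ℤ) (min_le_right _ _)).trans (pow_vI_dvd p a)
  obtain ⟨d₁, hd₁⟩ : ((p:ℤ)^e) ∣ d := (pow_dvd_pow (p:ℤ) (min_le_left _ _)).trans (pow_vI_dvd p d)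
  have ha₁0 : a₁ ≠ 0 := fun h => ha (by simp [ha₁, h])
  have hd₁0 : d₁ ≠ 0 := fun h => hd0 (by simp [hd₁, h])
  have hr1mem : d * a₁ ∈ D := (hDd _).2 ⟨a₁, rfl⟩
  have hda : d * a₁ = a * d₁ := by rw [ha₁, hd₁]; ring
  have hlower : padicValNat p M ≤ vc + vI p d₁ := by
    have h1 : u * BS.b m n ^ (d * a₁) * u⁻¹ ∈ Λ' := (hDmem _).1 hr1mem
    rw [hda, hrel, hbM] at h1
    have h2 : vI p (M:ℤ) ≤ vI p (c * d₁) := vI_dvd_le (mul_ne_zero hc hd₁0) h1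
    rw [vI_mul c d₁ hc hd₁0, hvM] at h2
    omega
  have hvd₁ : e + vI p d₁ = vI p d := by
    have := vI_pow_mul (p := p) e d₁ hd₁0
    rw [← hd₁] at this
    omega
  -- e = va (the case e = vI p d < va contradicts hMc)
  have hcase : e = va := by
    rcases Nat.lt_or_ge (vI p d) va with h | h
    · exfalso
      have he' : e = vI p d := by omega
      omega
    · omega
  have hval : vI p d + vc = padicValNat p M + va := by omega
  -- conclude
  refine ⟨d.natAbs, Int.natAbs_pos.2 hd0, ?_, ?_⟩
  · ext y
    simp only [Subgroup.mem_inf, mem_map_conj_iff, inv_inv, Subgroup.mem_zpowers_iff]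
    constructor
    · rintro ⟨hy1, r, rfl⟩
      have hr : d ∣ r := (hDd r).1 ((hDmem r).2 hy1)
      have hr' : (d.natAbs : ℤ) ∣ r := (Int.natAbs_dvd).2 hr
      obtain ⟨s, rfl⟩ := hr'
      exact ⟨s, by rw [← zpow_natCast, ← zpow_mul]⟩
    · rintro ⟨s, rfl⟩
      rw [← zpow_natCast, ← zpow_mul]
      constructor
      · rw [← hDmem]
        refine (hDd _).2 (Dvd.dvd.mul_right ?_ s)
        exact Int.dvd_natAbs.mpr dvd_rfl
      · exact ⟨(d.natAbs : ℤ) * s, rfl⟩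
  · have : vI p d = padicValNat p d.natAbs := rfl
    omega

end Step

section Main

lemma map_conj_one {G : Type*} [Group G] (Λ : Subgroup G) :
    Subgroup.map (MulAut.conj (1:G)⁻¹).toMonoidHom Λ = Λ := by
  ext y; rw [mem_map_conj_iff]; simp

lemma map_conj_mul {G : Type*} [Group G] (x u : G) (Λ : Subgroup G) :
    Subgroup.map (MulAut.conj (x * u)⁻¹).toMonoidHom Λ
      = Subgroup.map (MulAut.conj u⁻¹).toMonoidHom
          (Subgroup.map (MulAut.conj x⁻¹).toMonoidHom Λ) := by
  ext y
  simp only [mem_map_conj_iff, inv_inv, mul_inv_rev, mul_assoc]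

lemma BS.step_b (m n : ℤ) (u : BS m n) (hu : u ∈ Subgroup.zpowers (BS.b m n))
    (Λ' : Subgroup (BS m n)) :
    Subgroup.map (MulAut.conj u⁻¹).toMonoidHom Λ' ⊓ Subgroup.zpowers (BS.b m n)
      = Λ' ⊓ Subgroup.zpowers (BS.b m n) := by
  have hcomm : ∀ y ∈ Subgroup.zpowers (BS.b m n), u * y * u⁻¹ = y := by
    intro y hy
    rw [Subgroup.mem_zpowers_iff] at hy
    rw [Subgroup.mem_zpowers_iff] at hu
    obtain ⟨r, rfl⟩ := hu
    obtain ⟨w, rfl⟩ := hy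
    have h := ((Commute.refl (BS.b m n)).zpow_zpow r w).eq
    rw [h, mul_inv_cancel_right]
  ext y
  simp only [Subgroup.mem_inf, mem_map_conj_iff, inv_inv]
  constructor
  · rintro ⟨h1, h2⟩
    exact ⟨by rwa [hcomm y h2] at h1, h2⟩
  · rintro ⟨h1, h2⟩
    exact ⟨by rwa [hcomm y h2], h2⟩

end Main

/-- In `Γ = BS(m,n)` with `min(|m|,|n|) > 1` and `v_p(m) > v_p(n)`:
if `Λ ∩ ⟨b⟩ = ⟨b^N⟩` with `v_p(N) > v_p(m)`, and `g_1, …, g_k` are standard letters whose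
partial `t`-counts dominate the `t⁻¹`-counts, then with `s_k = g_1 ⋯ g_k` one has
`s_k⁻¹ Λ s_k ∩ ⟨b⟩ = ⟨b^{N_k}⟩` for some `N_k > 0` with
`v_p(N_k) = (h_k⁺ - h_k⁻)(v_p(m) - v_p(n)) + v_p(N)`. -/
theorem conj_intersection_valuation
    (m n : ℤ) (h1m : 1 < m.natAbs) (h1n : 1 < n.natAbs)
    (p : ℕ) (hp : p.Prime)
    (hval : padicValNat p n.natAbs < padicValNat p m.natAbs)
    (N : ℕ) (hN : 0 < N) (hNp : padicValNat p m.natAbs < padicValNat p N)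
    (Λ : Subgroup (BS m n))
    (hΛ : Λ ⊓ Subgroup.zpowers (BS.b m n) = Subgroup.zpowers (BS.b m n ^ N))
    (k : ℕ) (g : ℕ → Bool × Bool)
    (hdom : ∀ i, 1 ≤ i → i ≤ k →
      ((Finset.Icc 1 i).filter (fun j => g j = (true, true))).card ≤
        ((Finset.Icc 1 i).filter (fun j => g j = (true, false))).card)
    (sk : BS m n)
    (hsk : sk = ((List.range k).map (fun j => BS.letter m n (g (j + 1)))).prod) :
    ∃ Nk : ℕ, 0 < Nk ∧
      Subgroup.map (MulAut.conj sk⁻¹).toMonoidHom Λ ⊓ Subgroup.zpowers (BS.b m n)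
        = Subgroup.zpowers (BS.b m n ^ Nk) ∧
      (padicValNat p Nk : ℤ)
        = ((((Finset.Icc 1 k).filter (fun j => g j = (true, false))).card : ℤ)
            - (((Finset.Icc 1 k).filter (fun j => g j = (true, true))).card : ℤ))
          * ((padicValNat p m.natAbs : ℤ) - (padicValNat p n.natAbs : ℤ))
          + (padicValNat p N : ℤ) := by
  haveI : Fact p.Prime := ⟨hp⟩
  have hm : m ≠ 0 := by
    intro h; rw [h] at h1m; simp at h1m
  have hn : n ≠ 0 := by
    intro h; rw [h] at h1n; simp at h1n
  set vm := padicValNat p m.natAbs with hvm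
  set vn := padicValNat p n.natAbs with hvn
  set A : ℕ → ℕ := fun i => ((Finset.Icc 1 i).filter (fun j => g j = (true, false))).card with hA
  set B : ℕ → ℕ := fun i => ((Finset.Icc 1 i).filter (fun j => g j = (true, true))).card with hB
  set s : ℕ → BS m n := fun i =>
    ((List.range i).map (fun j => BS.letter m n (g (j + 1)))).prod with hs
  have key : ∀ i, i ≤ k → ∃ M : ℕ, 0 < M ∧
      Subgroup.map (MulAut.conj (s i)⁻¹).toMonoidHom Λ ⊓ Subgroup.zpowers (BS.b m n)
        = Subgroup.zpowers (BS.b m n ^ M) ∧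
      (padicValNat p M : ℤ) = ((A i : ℤ) - B i) * ((vm:ℤ) - vn) + padicValNat p N := by
    intro i
    induction i with
    | zero =>
      intro _
      refine ⟨N, hN, ?_, by simp [hA, hB]⟩
      have hs0 : s 0 = 1 := by simp [hs]
      rw [hs0, map_conj_one, hΛ]
    | succ i ih =>
      intro hik
      obtain ⟨M, hM0, hMint, hMval⟩ := ih (by omega)
      have hAB : B i ≤ A i := by
        rcases Nat.eq_zero_or_pos i with h0 | h0
        · simp [hA, hB, h0]
        · exact hdom i h0 (by omega)
      have hMbig : vm < padicValNat p M := by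
        have h2 : (0:ℤ) ≤ ((A i : ℤ) - B i) * ((vm:ℤ) - vn) := by
          apply mul_nonneg
          · have : (B i : ℤ) ≤ A i := by exact_mod_cast hAB
            linarith
          · have : (vn : ℤ) ≤ vm := by exact_mod_cast hval.le
            linarith
        have h3 : (padicValNat p N : ℤ) ≤ padicValNat p M := by linarith
        have h4 : padicValNat p N ≤ padicValNat p M := by exact_mod_cast h3
        omega
      have hsplit : s (i+1) = s i * BS.letter m n (g (i+1)) := by
        simp [hs, List.range_succ]
      have hmap : Subgroup.map (MulAut.conj (s (i+1))⁻¹).toMonoidHom Λ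
          = Subgroup.map (MulAut.conj (BS.letter m n (g (i+1)))⁻¹).toMonoidHom
              (Subgroup.map (MulAut.conj (s i)⁻¹).toMonoidHom Λ) := by
        rw [hsplit]; exact map_conj_mul _ _ _
      have hIcc : Finset.Icc 1 (i+1) = insert (i+1) (Finset.Icc 1 i) :=
        (Finset.insert_Icc_right_eq_Icc_add_one (by omega)).symm
      have hnotmem : (i+1) ∉ Finset.Icc 1 i := by simp
      rcases hg : g (i+1) with ⟨b1, b2⟩
      have hA1 : A (i+1) = A i + (if (b1, b2) = (true, false) then 1 else 0) := by
        simp only [hA, hIcc, Finset.filter_insert, hg]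
        split
        · rw [Finset.card_insert_of_notMem (fun hmem => hnotmem (Finset.mem_filter.1 hmem).1)]
        · rfl
      have hB1 : B (i+1) = B i + (if (b1, b2) = (true, true) then 1 else 0) := by
        simp only [hB, hIcc, Finset.filter_insert, hg]
        split
        · rw [Finset.card_insert_of_notMem (fun hmem => hnotmem (Finset.mem_filter.1 hmem).1)]
        · rfl
      rcases b1 with _ | _ <;> rcases b2 with _ | _
      -- case b
      · have hlet : BS.letter m n (false, false) ∈ Subgroup.zpowers (BS.b m n) := by
          rw [Subgroup.mem_zpowers_iff]; exact ⟨1, by simp [BS.letter]⟩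
        refine ⟨M, hM0, ?_, ?_⟩
        · rw [hmap, hg, BS.step_b m n _ hlet, hMint]
        · norm_num [hA1, hB1]
          exact hMval
      -- case b⁻¹
      · have hlet : BS.letter m n (false, true) ∈ Subgroup.zpowers (BS.b m n) := by
          rw [Subgroup.mem_zpowers_iff]; exact ⟨-1, by simp [BS.letter]⟩
        refine ⟨M, hM0, ?_, ?_⟩
        · rw [hmap, hg, BS.step_b m n _ hlet, hMint]
        · norm_num [hA1, hB1]
          exact hMval
      -- case t
      · have hrel : ∀ r : ℤ, BS.t m n * BS.b m n ^ (m * r) * (BS.t m n)⁻¹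
            = BS.b m n ^ (n * r) := BS.rel_zpow m n
        have hMc : vI p n < padicValNat p M := by
          have : vI p n = vn := rfl
          omega
        obtain ⟨M', hM'0, hM'int, hM'val⟩ := BS.step m n hm hn m n hm hn (BS.t m n) hrel M hM0
          hMc (Subgroup.map (MulAut.conj (s i)⁻¹).toMonoidHom Λ) hMint
        refine ⟨M', hM'0, ?_, ?_⟩
        · rw [hmap, hg]
          exact hM'int
        · have e1 : vI p n = vn := rfl
          have e2 : vI p m = vm := rfl
          rw [e1, e2] at hM'val
          norm_num [hA1, hB1]
          have h5 : (padicValNat p M' : ℤ) + vn = padicValNat p M + vm := by exact_mod_cast hM'val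
          have h6 : (vn:ℤ) < vm := by exact_mod_cast hval
          linarith [hMval, h5]
      -- case t⁻¹
      · have hrel : ∀ r : ℤ, (BS.t m n)⁻¹ * BS.b m n ^ (n * r) * ((BS.t m n)⁻¹)⁻¹
            = BS.b m n ^ (m * r) := BS.rel_zpow' m n
        have hMc : vI p m < padicValNat p M := hMbig
        obtain ⟨M', hM'0, hM'int, hM'val⟩ := BS.step m n hm hn n m hn hm ((BS.t m n)⁻¹) hrel M hM0
          hMc (Subgroup.map (MulAut.conj (s i)⁻¹).toMonoidHom Λ) hMint
        refine ⟨M', hM'0, ?_, ?_⟩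
        · rw [hmap, hg]
          exact hM'int
        · have e1 : vI p n = vn := rfl
          have e2 : vI p m = vm := rfl
          rw [e1, e2] at hM'val
          norm_num [hA1, hB1]
          have h5 : (padicValNat p M' : ℤ) + vm = padicValNat p M + vn := by exact_mod_cast hM'val
          linarith [hMval, h5]
  obtain ⟨Nk, h1, h2, h3⟩ := key k le_rfl
  have hsk' : sk = s k := by simp only [hs]; exact hsk
  rw [hsk']
  exact ⟨Nk, h1, h2, h3⟩
end

section
/- Let m, n be integers with min(|m|,|n|) > 1 and |m| ≠ |n|, let Γ = BS(m,n) = ⟨b,t ∣ t b^m t⁻¹ = b^n⟩, and let p be a prime with v_p(m) > v_p(n). Let μ be a probability measure on Γ with support exactly {b, b⁻¹, t, t⁻¹} and with μ(t) > μ(t⁻¹). Let (G_k)_{k≥1} be independent Γ-valued random variables each with distribution μ and S_k = G_1 ⋯ G_k. Let N be a positive integer with v_p(N) > v_p(m) and let M be any positive integer. Then limsup_{k→∞} ℙ( ∃ subgroup Λ ≤ Γ with Λ ∩ ⟨b⟩ = ⟨b^N⟩ and S_k⁻¹ Λ S_k ∩ ⟨b⟩ = ⟨b^M⟩ ) ≤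 1 − (μ(t) − μ(t⁻¹)). In particular, ℙ(S_k⁻¹·U_N·S_k ∩ U_M ≠ ∅) does not converge to 1, where U_L := {Λ ≤ Γ : Λ ∩ ⟨b⟩ = ⟨b^L⟩}. -/
open MeasureTheory ProbabilityTheory Filter
open scoped ENNReal

namespace BSaux

section Algebra

variable (m n : ℤ)

lemma mk_b : (QuotientGroup.mk' (Subgroup.normalClosure (BSRels m n))) (FreeGroup.of false)
    = BS.b m n := rfl

lemma mk_t : (QuotientGroup.mk' (Subgroup.normalClosure (BSRels m n))) (FreeGroup.of true)
    = BS.t m n := rfl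

lemma BS_rel : BS.t m n * BS.b m n ^ m * (BS.t m n)⁻¹ = BS.b m n ^ n := by
  have h : ((QuotientGroup.mk' (Subgroup.normalClosure (BSRels m n)))
      (FreeGroup.of true * FreeGroup.of false ^ m * (FreeGroup.of true)⁻¹ *
        FreeGroup.of false ^ (-n))) = 1 := by
    rw [QuotientGroup.mk'_apply, QuotientGroup.eq_one_iff]
    exact Subgroup.subset_normalClosure rfl
  simp only [map_mul, map_zpow, map_inv, mk_b, mk_t] at h
  change BS.t m n * BS.b m n ^ m * (BS.t m n)⁻¹ * BS.b m n ^ (-n) = 1 at h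
  rw [zpow_neg, mul_inv_eq_one] at h
  exact h

lemma rel_pow (k : ℤ) :
    BS.t m n * BS.b m n ^ (m * k) * (BS.t m n)⁻¹ = BS.b m n ^ (n * k) := by
  rw [zpow_mul, zpow_mul, ← BS_rel m n, conj_zpow]

lemma rel_pow' (k : ℤ) :
    (BS.t m n)⁻¹ * BS.b m n ^ (n * k) * BS.t m n = BS.b m n ^ (m * k) := by
  rw [← rel_pow m n k]
  group

end Algebra

section Rep

variable (m n : ℤ) (hm : (m:ℚ) ≠ 0) (hn : (n:ℚ) ≠ 0)

lemma addRight_mul (a b : ℚ) :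
    Equiv.addRight (a + b) = Equiv.addRight a * Equiv.addRight b := by
  ext x
  simp [Equiv.Perm.mul_apply]
  ring

/-- The additive group `ℚ` mapped into permutations by translations. -/
def AR : Multiplicative ℚ →* Equiv.Perm ℚ where
  toFun a := Equiv.addRight a.toAdd
  map_one' := by ext x; simp
  map_mul' a b := by
    ext x
    simp [Equiv.Perm.mul_apply]
    ring

lemma addRight_zpow (k : ℤ) :
    (Equiv.addRight (1:ℚ)) ^ k = Equiv.addRight (k:ℚ) := by
  have h1 : Equiv.addRight (1:ℚ) = AR (Multiplicative.ofAdd (1:ℚ)) := rfl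
  rw [h1, ← map_zpow]
  have : (Multiplicative.ofAdd (1:ℚ)) ^ k = Multiplicative.ofAdd (k:ℚ) := by
    rw [← ofAdd_zsmul]
    norm_num
  rw [this]
  rfl

/-- The representation of `BS(m,n)` by affine transformations of `ℚ`. -/
noncomputable def bsrep : BS m n →* Equiv.Perm ℚ :=
  PresentedGroup.toGroup (f := fun x => match x with
    | true => Equiv.mulLeft₀ ((n:ℚ)/m) (div_ne_zero hn hm)
    | false => Equiv.addRight (1:ℚ)) (by
      rintro r hr
      rw [BSRels, Set.mem_singleton_iff] at hr
      subst hr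
      simp only [map_mul, map_zpow, map_inv, FreeGroup.lift_apply_of]
      rw [addRight_zpow, addRight_zpow]
      ext x
      simp only [Equiv.Perm.mul_apply, Equiv.Perm.one_apply, Equiv.coe_addRight]
      rw [show ((Equiv.mulLeft₀ ((n:ℚ)/m) (div_ne_zero hn hm))⁻¹ : Equiv.Perm ℚ)
        = (Equiv.mulLeft₀ ((n:ℚ)/m) (div_ne_zero hn hm)).symm from rfl]
      rw [Equiv.mulLeft₀_symm_apply]
      rw [show ∀ y, (Equiv.mulLeft₀ ((n:ℚ)/m) (div_ne_zero hn hm)) y = (n/m) * y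
        from fun y => rfl]
      push_cast
      field_simp
      ring)

lemma bsrep_b : bsrep m n hm hn (BS.b m n) = Equiv.addRight (1:ℚ) :=
  PresentedGroup.toGroup.of _

include hm hn in
lemma b_zpow_inj {J J' : ℤ} (h : BS.b m n ^ J = BS.b m n ^ J') : J = J' := by
  have h2 := congrArg (bsrep m n hm hn) h
  rw [map_zpow, map_zpow, bsrep_b, addRight_zpow, addRight_zpow] at h2
  have h3 := congrArg (fun σ : Equiv.Perm ℚ => σ 0) h2
  simp only [Equiv.coe_addRight, zero_add] at h3
  exact_mod_cast h3

end Rep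


namespace BSaux

section Steps

variable (m n : ℤ) (p : ℕ) (hp : p.Prime) (hm0 : m ≠ 0) (hn0 : n ≠ 0)

include hp in
lemma pow_dvd_int {J : ℤ} (hJ : J ≠ 0) {c : ℕ} (hc : c ≤ J.natAbs.factorization p) :
    (p:ℤ)^c ∣ J := by
  have h1 : (p^c : ℕ) ∣ J.natAbs :=
    (hp.pow_dvd_iff_le_factorization (Int.natAbs_ne_zero.mpr hJ)).mpr hc
  have h2 : ((p:ℤ))^c ∣ (J.natAbs : ℤ) := by exact_mod_cast Int.natCast_dvd_natCast.mpr h1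
  exact Int.dvd_natAbs.mp h2

include hp in
lemma int_dvd_le_factor {J : ℤ} (hJ : J ≠ 0) {c : ℕ} (hc : (p:ℤ)^c ∣ J) :
    c ≤ J.natAbs.factorization p := by
  have h1 : ((p:ℤ))^c ∣ (J.natAbs : ℤ) := Int.dvd_natAbs.mpr hc
  have h2 : (p^c : ℕ) ∣ J.natAbs := by exact_mod_cast h1
  exact (hp.pow_dvd_iff_le_factorization (Int.natAbs_ne_zero.mpr hJ)).mp h2

include hp hm0 hn0 in
lemma step_up (hval : n.natAbs.factorization p < m.natAbs.factorization p)
    (Λ' : Subgroup (BS m n)) (V : ℕ)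
    (hV : n.natAbs.factorization p < V)
    (hQ : ∀ J : ℤ, BS.b m n ^ J ∈ Λ' → (p:ℤ)^V ∣ J) (J : ℤ)
    (hJ : BS.t m n * BS.b m n ^ J * (BS.t m n)⁻¹ ∈ Λ') :
    (p:ℤ)^(V + (m.natAbs.factorization p - n.natAbs.factorization p)) ∣ J := by
  rcases eq_or_ne J 0 with rfl | hJ0
  · exact dvd_zero _
  set a := m.natAbs.factorization p with ha
  set a' := n.natAbs.factorization p with ha'
  set e := J.natAbs.factorization p with he
  set c := min e a with hc
  have hpcJ : (p:ℤ)^c ∣ J := pow_dvd_int p hp hJ0 (min_le_left _ _)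
  have hpcm : (p:ℤ)^c ∣ m := pow_dvd_int p hp hm0 (min_le_right _ _)
  obtain ⟨J', hJ'⟩ := hpcJ
  obtain ⟨m', hm'⟩ := hpcm
  have key : BS.b m n ^ (n * J') ∈ Λ' := by
    have h1 : (BS.t m n * BS.b m n ^ J * (BS.t m n)⁻¹)^m' ∈ Λ' := Subgroup.zpow_mem _ hJ _
    rw [conj_zpow, ← zpow_mul] at h1
    rw [show J * m' = m * J' by rw [hJ', hm']; ring] at h1
    rw [rel_pow m n J'] at h1
    exact h1
  have hJ'0 : J' ≠ 0 := by rintro rfl; rw [mul_zero] at hJ'; exact hJ0 hJ'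
  have hnJ'0 : n * J' ≠ 0 := mul_ne_zero hn0 hJ'0
  have hVle : V ≤ (n*J').natAbs.factorization p := int_dvd_le_factor p hp hnJ'0 (hQ _ key)
  have hfmul : (n*J').natAbs.factorization p = a' + J'.natAbs.factorization p := by
    rw [Int.natAbs_mul, Nat.factorization_mul (Int.natAbs_ne_zero.mpr hn0)
      (Int.natAbs_ne_zero.mpr hJ'0)]
    simp [ha']
  have hesplit : e = c + J'.natAbs.factorization p := by
    rw [he, hJ', Int.natAbs_mul, Nat.factorization_mul (a := ((p:ℤ)^c).natAbs)
      (by simp [hp.ne_zero]) (Int.natAbs_ne_zero.mpr hJ'0)]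
    simp [Int.natAbs_pow, hp.factorization_pow]
  have hfin : V + (a - a') ≤ e := by omega
  exact pow_dvd_int p hp hJ0 hfin

include hp hm0 hn0 in
lemma step_down (hval : n.natAbs.factorization p < m.natAbs.factorization p)
    (Λ' : Subgroup (BS m n)) (V : ℕ)
    (hV : m.natAbs.factorization p < V)
    (hQ : ∀ J : ℤ, BS.b m n ^ J ∈ Λ' → (p:ℤ)^V ∣ J) (J : ℤ)
    (hJ : (BS.t m n)⁻¹ * BS.b m n ^ J * BS.t m n ∈ Λ') :
    (p:ℤ)^(V - (m.natAbs.factorization p - n.natAbs.factorization p)) ∣ J := by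
  rcases eq_or_ne J 0 with rfl | hJ0
  · exact dvd_zero _
  set a := m.natAbs.factorization p with ha
  set a' := n.natAbs.factorization p with ha'
  set e := J.natAbs.factorization p with he
  set c := min e a' with hc
  have hpcJ : (p:ℤ)^c ∣ J := pow_dvd_int p hp hJ0 (min_le_left _ _)
  have hpcn : (p:ℤ)^c ∣ n := pow_dvd_int p hp hn0 (min_le_right _ _)
  obtain ⟨J', hJ'⟩ := hpcJ
  obtain ⟨n', hn'⟩ := hpcn
  have key : BS.b m n ^ (m * J') ∈ Λ' := by
    have h1 : ((BS.t m n)⁻¹ * BS.b m n ^ J * BS.t m n)^n' ∈ Λ' := Subgroup.zpow_mem _ hJ _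
    rw [show (BS.t m n)⁻¹ * BS.b m n ^ J * BS.t m n
      = (BS.t m n)⁻¹ * BS.b m n ^ J * ((BS.t m n)⁻¹)⁻¹ by rw [inv_inv]] at h1
    rw [conj_zpow, ← zpow_mul] at h1
    rw [show J * n' = n * J' by rw [hJ', hn']; ring] at h1
    rw [show (BS.t m n)⁻¹ * BS.b m n ^ (n * J') * ((BS.t m n)⁻¹)⁻¹
      = (BS.t m n)⁻¹ * BS.b m n ^ (n * J') * BS.t m n by rw [inv_inv]] at h1
    rw [rel_pow' m n J'] at h1
    exact h1
  have hJ'0 : J' ≠ 0 := by rintro rfl; rw [mul_zero] at hJ'; exact hJ0 hJ'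
  have hmJ'0 : m * J' ≠ 0 := mul_ne_zero hm0 hJ'0
  have hVle : V ≤ (m*J').natAbs.factorization p := int_dvd_le_factor p hp hmJ'0 (hQ _ key)
  have hfmul : (m*J').natAbs.factorization p = a + J'.natAbs.factorization p := by
    rw [Int.natAbs_mul, Nat.factorization_mul (Int.natAbs_ne_zero.mpr hm0)
      (Int.natAbs_ne_zero.mpr hJ'0)]
    simp [ha]
  have hesplit : e = c + J'.natAbs.factorization p := by
    rw [he, hJ', Int.natAbs_mul, Nat.factorization_mul (a := ((p:ℤ)^c).natAbs)
      (by simp [hp.ne_zero]) (Int.natAbs_ne_zero.mpr hJ'0)]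
    simp [Int.natAbs_pow, hp.factorization_pow]
  have hfin : V - (a - a') ≤ e := by omega
  exact pow_dvd_int p hp hJ0 hfin

end Steps


section Det

variable (m n : ℤ) (p : ℕ) (hp : p.Prime)

open Classical in
/-- The increment of the `t`-exponent walk determined by a letter. -/
noncomputable def eps (g : BS m n) : ℤ := if g = BS.t m n then 1 else if g = (BS.t m n)⁻¹ then -1 else 0

lemma eps_le_one (g : BS m n) : eps m n g ≤ 1 := by unfold eps; split_ifs <;> omega

variable (hm1 : 1 < m.natAbs) (hn1 : 1 < n.natAbs)
variable (hval : n.natAbs.factorization p < m.natAbs.factorization p)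
variable (N M : ℕ) (hN : 0 < N) (hM : 0 < M)
variable (hNp : m.natAbs.factorization p < N.factorization p)

include hp hm1 hn1 hval hN hM hNp in
lemma det_main (x : ℕ → BS m n) (k : ℕ)
    (hx : ∀ i, i < k → x i ∈ ({BS.b m n, (BS.b m n)⁻¹, BS.t m n, (BS.t m n)⁻¹} : Set (BS m n)))
    (hT : ∀ j, j ≤ k → 0 ≤ ∑ i ∈ Finset.range j, eps m n (x i))
    (hTk : (M.factorization p : ℤ) < ∑ i ∈ Finset.range k, eps m n (x i))
    (Λ : Subgroup (BS m n))
    (h1 : Λ ⊓ Subgroup.zpowers (BS.b m n) = Subgroup.zpowers (BS.b m n ^ N))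
    (h2 : Subgroup.map (MulAut.conj (((List.range k).map x).prod)⁻¹).toMonoidHom Λ ⊓
        Subgroup.zpowers (BS.b m n) = Subgroup.zpowers (BS.b m n ^ M)) : False := by
  have hm0 : m ≠ 0 := by rintro rfl; simp at hm1
  have hn0 : n ≠ 0 := by rintro rfl; simp at hn1
  have hmQ : (m:ℚ) ≠ 0 := by exact_mod_cast hm0
  have hnQ : (n:ℚ) ≠ 0 := by exact_mod_cast hn0
  set a := m.natAbs.factorization p with ha
  set a' := n.natAbs.factorization p with ha'
  set vpN := N.factorization p with hvpN
  set vpM := M.factorization p with hvpM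
  set d := a - a' with hd
  have hd1 : 1 ≤ d := by omega
  set Sl : ℕ → BS m n := fun j => ((List.range j).map x).prod with hSl
  set Λat : ℕ → Subgroup (BS m n) :=
    fun j => Subgroup.map (MulAut.conj (Sl j)⁻¹).toMonoidHom Λ with hΛat
  have hmem : ∀ j (y : BS m n), y ∈ Λat j ↔ Sl j * y * (Sl j)⁻¹ ∈ Λ := by
    intro j y
    rw [hΛat]
    rw [Subgroup.mem_map_equiv, MulAut.conj_symm_apply, inv_inv]
  have hTsum : ∀ j, ∑ i ∈ Finset.range (j+1), eps m n (x i)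
      = (∑ i ∈ Finset.range j, eps m n (x i)) + eps m n (x j) :=
    fun j => Finset.sum_range_succ _ _
  have claim : ∀ j, j ≤ k → ∀ J : ℤ, BS.b m n ^ J ∈ Λat j →
      (p:ℤ)^(((vpN:ℤ) + d * (∑ i ∈ Finset.range j, eps m n (x i))).toNat) ∣ J := by
    intro j
    induction j with
    | zero =>
      intro _ J hJ
      simp only [Finset.range_zero, Finset.sum_empty, mul_zero, add_zero, Int.toNat_natCast]
      rw [hmem] at hJ
      have hSl0 : Sl 0 = 1 := by simp [hSl]
      rw [hSl0, one_mul, inv_one, mul_one] at hJ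
      have hJ2 : BS.b m n ^ J ∈ Λ ⊓ Subgroup.zpowers (BS.b m n) :=
        ⟨hJ, Subgroup.mem_zpowers_iff.mpr ⟨J, rfl⟩⟩
      rw [h1] at hJ2
      obtain ⟨c, hc⟩ := Subgroup.mem_zpowers_iff.mp hJ2
      rw [← zpow_natCast (BS.b m n) N, ← zpow_mul] at hc
      have hJc : (N:ℤ) * c = J := b_zpow_inj m n hmQ hnQ hc
      have hNdvd : (N:ℤ) ∣ J := ⟨c, hJc.symm⟩
      have hpN : ((p:ℤ))^vpN ∣ (N:ℤ) := by
        have := pow_padicValNat_dvd (p := p) (n := N)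
        rw [← Nat.factorization_def N hp] at this
        exact_mod_cast Int.natCast_dvd_natCast.mpr this
      exact hpN.trans hNdvd
    | succ j ih =>
      intro hj1 J hJ
      have hjk : j ≤ k := by omega
      have ihj := ih hjk
      have hTj := hT j hjk
      set Tj := ∑ i ∈ Finset.range j, eps m n (x i) with hTjdef
      have hdTj : 0 ≤ (d:ℤ) * Tj := mul_nonneg (by positivity) hTj
      have hSls : Sl (j+1) = Sl j * x j := by
        simp [hSl, List.range_succ]
      have hstep : ∀ y : BS m n, y ∈ Λat (j+1) ↔ x j * y * (x j)⁻¹ ∈ Λat j := by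
        intro y
        rw [hmem, hmem, hSls,
          show Sl j * x j * y * (Sl j * x j)⁻¹ = Sl j * (x j * y * (x j)⁻¹) * (Sl j)⁻¹ by group]
      rw [hTsum j, ← hTjdef]
      by_cases hxt : x j = BS.t m n
      · have heps : eps m n (x j) = 1 := by unfold eps; rw [if_pos hxt]
        rw [heps]
        have hJ' : BS.t m n * BS.b m n ^ J * (BS.t m n)⁻¹ ∈ Λat j := by
          rw [← hxt]; exact (hstep _).mp hJ
        have hVa' : a' < ((vpN:ℤ) + d * Tj).toNat := by omega
        have := step_up m n p hp hm0 hn0 hval (Λat j) _ hVa' ihj J hJ'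
        have hexp : ((vpN:ℤ) + d * (Tj + 1)).toNat = ((vpN:ℤ) + d * Tj).toNat + d := by
          rw [mul_add, mul_one]; omega
        rw [hexp]
        exact this
      · by_cases hxt' : x j = (BS.t m n)⁻¹
        · have heps : eps m n (x j) = -1 := by unfold eps; rw [if_neg hxt, if_pos hxt']
          rw [heps]
          have hJ' : (BS.t m n)⁻¹ * BS.b m n ^ J * BS.t m n ∈ Λat j := by
            have h0 := (hstep _).mp hJ
            rw [hxt', inv_inv] at h0
            exact h0
          have hVa : a < ((vpN:ℤ) + d * Tj).toNat := by omega
          have := step_down m n p hp hm0 hn0 hval (Λat j) _ hVa ihj J hJ'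
          have hexp : ((vpN:ℤ) + d * (Tj + -1)).toNat = ((vpN:ℤ) + d * Tj).toNat - d := by
            rw [mul_add, mul_neg_one]; omega
          rw [hexp]
          exact this
        · have heps : eps m n (x j) = 0 := by unfold eps; rw [if_neg hxt, if_neg hxt']
          rw [heps, add_zero]
          have hbb : x j * BS.b m n ^ J * (x j)⁻¹ = BS.b m n ^ J := by
            rcases hx j (by omega) with h | h | h | h
            · rw [h]; group
            · rw [h]; group
            · exact absurd h hxt
            · exact absurd h hxt'
          apply ihj
          rw [← hbb]
          exact (hstep _).mp hJ
  -- conclude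
  have hbM : BS.b m n ^ ((M:ℕ):ℤ) ∈ Λat k := by
    rw [zpow_natCast]
    have hmm : BS.b m n ^ M ∈ Subgroup.zpowers (BS.b m n ^ M) := Subgroup.mem_zpowers _
    rw [← h2] at hmm
    exact hmm.1
  have hdvd := claim k le_rfl _ hbM
  set Tk := ∑ i ∈ Finset.range k, eps m n (x i) with hTkdef
  have hTk0 : 0 ≤ Tk := hT k le_rfl
  have hdTk : (Tk:ℤ) ≤ (d:ℤ) * Tk := le_mul_of_one_le_left hTk0 (by exact_mod_cast hd1)
  set W := ((vpN:ℤ) + d * Tk).toNat with hW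
  have hdvdN : (p:ℕ)^W ∣ M := by
    have : ((p:ℕ)^W : ℤ) ∣ (M:ℤ) := by exact_mod_cast hdvd
    exact_mod_cast this
  have hWle : W ≤ vpM := (hp.pow_dvd_iff_le_factorization hM.ne').mp hdvdN
  omega

end Det

namespace BSaux


open Finset

open scoped Classical

noncomputable section Comb

/-- Extension of a finite tuple by zero. -/
def ext (k : ℕ) (y : Fin k → ℤ) : ℕ → ℤ := fun i => if h : i < k then y ⟨i, h⟩ else 0

/-- The letters set. -/
def letters : Finset ℤ := {-1, 0, 1}

/-- The cube of `{-1,0,1}`-valued paths of length `k`, as functions `ℕ → ℤ` vanishing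
from time `k` on. -/
def cube (k : ℕ) : Finset (ℕ → ℤ) :=
  (Fintype.piFinset (fun _ : Fin k => letters)).image (ext k)

lemma ext_injective (k : ℕ) : Function.Injective (ext k) := by
  intro y y' h
  funext i
  have := congrFun h i.val
  simp [ext, i.isLt] at this
  exact this

lemma mem_cube {k : ℕ} {z : ℕ → ℤ} :
    z ∈ cube k ↔ (∀ i, i < k → z i ∈ letters) ∧ ∀ i, k ≤ i → z i = 0 := by
  constructor
  · rintro hz
    obtain ⟨y, hy, rfl⟩ := Finset.mem_image.mp hz
    constructor
    · intro i hi
      simp only [ext, dif_pos hi]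
      exact Fintype.mem_piFinset.mp hy _
    · intro i hi
      simp [ext, Nat.not_lt.mpr hi]
  · rintro ⟨h1, h2⟩
    refine Finset.mem_image.mpr ⟨fun i => z i.val, ?_, ?_⟩
    · exact Fintype.mem_piFinset.mpr fun i => h1 i.val i.isLt
    · funext i
      by_cases hi : i < k
      · simp [ext, hi]
      · simp [ext, hi, h2 i (Nat.not_lt.mp hi)]

/-- Partial sums of a path. -/
def Tz (z : ℕ → ℤ) (j : ℕ) : ℤ := ∑ i ∈ range j, z i

variable (W : ℤ → ℝ)

/-- The weight of a path. -/
def weight (k : ℕ) (z : ℕ → ℤ) : ℝ := ∏ i ∈ range k, W (z i)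

lemma sum_cube (k : ℕ) (F : (ℕ → ℤ) → ℝ) :
    ∑ z ∈ cube k, F z = ∑ y ∈ Fintype.piFinset (fun _ : Fin k => letters), F (ext k y) :=
  Finset.sum_image (fun a _ b _ h => ext_injective k h)

lemma sum_cube_prod (k : ℕ) (F : ℕ → ℤ → ℝ) :
    ∑ z ∈ cube k, ∏ i ∈ range k, F i (z i) = ∏ i ∈ range k, ∑ v ∈ letters, F i v := by
  rw [sum_cube]
  rw [show ∏ i ∈ range k, ∑ v ∈ letters, F i v = ∏ i : Fin k, ∑ v ∈ letters, F i.val v from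
    (Fin.prod_univ_eq_prod_range _ _).symm]
  rw [Finset.prod_univ_sum]
  apply Finset.sum_congr rfl
  intro y _
  rw [← Fin.prod_univ_eq_prod_range (fun i => F i (ext k y i)) k]
  apply Finset.prod_congr rfl
  intro i _
  congr 1
  simp [ext, i.isLt]

variable (hW0 : ∀ z, 0 ≤ W z) (hW1 : ∑ z ∈ letters, W z = 1)

/-- drift -/
def drift : ℝ := W 1 - W (-1)

include hW1 in
lemma mass (k : ℕ) : ∑ z ∈ cube k, weight W k z = 1 := by
  have := sum_cube_prod k (fun _ v => W v)
  rw [hW1] at this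
  simpa [weight] using this

include hW1 in
lemma letters_sum_id : ∑ v ∈ letters, W v * v = drift W := by
  rw [show letters = insert (-1 : ℤ) (insert 0 {1}) from rfl]
  rw [Finset.sum_insert (by norm_num), Finset.sum_insert (by norm_num), Finset.sum_singleton]
  unfold drift
  push_cast
  ring

include hW1 in
lemma coord_mean (k : ℕ) (j : ℕ) (hj : j < k) :
    ∑ z ∈ cube k, weight W k z * (z j : ℝ) = drift W := by
  have key := sum_cube_prod k (fun i v => W v * (if i = j then (v:ℝ) else 1))
  have lhs_eq : ∀ z ∈ cube k,
      (∏ i ∈ range k, (fun i v => W v * (if i = j then (v:ℝ) else 1)) i (z i))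
      = weight W k z * (z j : ℝ) := by
    intro z _
    rw [Finset.prod_mul_distrib]
    congr 1
    rw [Finset.prod_ite_eq' (range k) j (fun i => ((z i : ℝ)))]
    simp [Finset.mem_range.mpr hj]
  rw [Finset.sum_congr rfl lhs_eq] at key
  rw [key]
  rw [Finset.prod_eq_single j
    (fun i _ hne => by simp [hne, hW1])
    (fun h => absurd (Finset.mem_range.mpr hj) h)]
  simp [letters_sum_id W hW1]

include hW1 in
lemma mean (k : ℕ) :
    ∑ z ∈ cube k, weight W k z * (Tz z k : ℝ) = drift W * k := by
  have : ∀ z, (Tz z k : ℝ) = ∑ j ∈ range k, (z j : ℝ) := by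
    intro z; unfold Tz; push_cast; ring
  calc ∑ z ∈ cube k, weight W k z * (Tz z k : ℝ)
      = ∑ z ∈ cube k, ∑ j ∈ range k, weight W k z * (z j : ℝ) := by
        apply Finset.sum_congr rfl; intro z _; rw [this, Finset.mul_sum]
    _ = ∑ j ∈ range k, ∑ z ∈ cube k, weight W k z * (z j : ℝ) := Finset.sum_comm
    _ = ∑ j ∈ range k, drift W := by
        apply Finset.sum_congr rfl; intro j hj
        exact coord_mean W hW1 k j (Finset.mem_range.mp hj)
    _ = drift W * k := by simp [mul_comm]

include hW0 hW1 in
lemma drift_abs : |drift W| ≤ 1 := by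
  have h1 : 0 ≤ W 1 := hW0 1
  have h2 : 0 ≤ W (-1) := hW0 (-1)
  have h0 : 0 ≤ W 0 := hW0 0
  have : W (-1) + (W 0 + W 1) = 1 := by
    rw [← hW1]
    rw [show letters = insert (-1 : ℤ) (insert 0 {1}) from rfl]
    rw [Finset.sum_insert (by norm_num), Finset.sum_insert (by norm_num),
      Finset.sum_singleton]
  unfold drift
  rw [abs_le]
  constructor <;> nlinarith

include hW0 hW1 in
lemma letters_sum_centered : ∑ v ∈ letters, W v * ((v : ℝ) - drift W) = 0 := by
  have h1 : ∑ v ∈ letters, W v * ((v:ℝ) - drift W)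
      = (∑ v ∈ letters, W v * v) - (∑ v ∈ letters, W v) * drift W := by
    rw [Finset.sum_mul, ← Finset.sum_sub_distrib]
    apply Finset.sum_congr rfl
    intro v _; ring
  rw [h1, letters_sum_id W hW1, hW1]
  ring

include hW0 hW1 in
lemma letters_sum_sq : ∑ v ∈ letters, W v * ((v : ℝ) - drift W)^2 ≤ 4 := by
  have habs := drift_abs W hW0 hW1
  rw [abs_le] at habs
  have : ∀ v ∈ letters, W v * ((v:ℝ) - drift W)^2 ≤ W v * 4 := by
    intro v hv
    apply mul_le_mul_of_nonneg_left _ (hW0 v)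
    fin_cases hv <;> (push_cast; nlinarith)
  calc ∑ v ∈ letters, W v * ((v:ℝ) - drift W)^2 ≤ ∑ v ∈ letters, W v * 4 :=
        Finset.sum_le_sum this
    _ = 4 := by rw [← Finset.sum_mul, hW1]; ring

include hW0 hW1 in
lemma covariance (k : ℕ) (j j' : ℕ) (hj : j < k) (hj' : j' < k) (hne : j ≠ j') :
    ∑ z ∈ cube k, weight W k z * (((z j : ℝ) - drift W) * ((z j' : ℝ) - drift W)) = 0 := by
  have key := sum_cube_prod k
    (fun i v => W v * ((if i = j then ((v:ℝ) - drift W) else 1)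
      * (if i = j' then ((v:ℝ) - drift W) else 1)))
  have lhs_eq : ∀ z ∈ cube k,
      (∏ i ∈ range k, W (z i) * ((if i = j then ((z i:ℝ) - drift W) else 1)
        * (if i = j' then ((z i:ℝ) - drift W) else 1)))
      = weight W k z * (((z j : ℝ) - drift W) * ((z j' : ℝ) - drift W)) := by
    intro z _
    rw [Finset.prod_mul_distrib]
    congr 1
    rw [Finset.prod_mul_distrib]
    congr 1
    · rw [Finset.prod_ite_eq' (range k) j (fun i => ((z i : ℝ) - drift W))]
      simp [Finset.mem_range.mpr hj]
    · rw [Finset.prod_ite_eq' (range k) j' (fun i => ((z i : ℝ) - drift W))]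
      simp [Finset.mem_range.mpr hj']
  rw [Finset.sum_congr rfl lhs_eq] at key
  rw [key]
  apply Finset.prod_eq_zero (Finset.mem_range.mpr hj)
  have h2 : ∀ v ∈ letters, W v * ((if j = j then ((v:ℝ) - drift W) else 1)
      * (if j = j' then ((v:ℝ) - drift W) else 1)) = W v * ((v:ℝ) - drift W) :=
    fun v _ => by simp [hne]
  rw [Finset.sum_congr rfl h2]
  exact letters_sum_centered W hW0 hW1

include hW0 hW1 in
lemma variance_diag (k : ℕ) (j : ℕ) (hj : j < k) :
    ∑ z ∈ cube k, weight W k z * ((z j : ℝ) - drift W)^2 ≤ 4 := by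
  have key := sum_cube_prod k (fun i v => W v * (if i = j then ((v:ℝ) - drift W)^2 else 1))
  have lhs_eq : ∀ z ∈ cube k,
      (∏ i ∈ range k, W (z i) * (if i = j then ((z i:ℝ) - drift W)^2 else 1))
      = weight W k z * ((z j : ℝ) - drift W)^2 := by
    intro z _
    rw [Finset.prod_mul_distrib]
    congr 1
    rw [Finset.prod_ite_eq' (range k) j (fun i => ((z i : ℝ) - drift W)^2)]
    simp [Finset.mem_range.mpr hj]
  rw [Finset.sum_congr rfl lhs_eq] at key
  rw [key]
  rw [Finset.prod_eq_single j
    (fun i _ hne => by simp [hne, hW1])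
    (fun h => absurd (Finset.mem_range.mpr hj) h)]
  simp only [if_pos rfl]
  exact le_trans (le_of_eq (by apply Finset.sum_congr rfl; intro v _; simp))
    (letters_sum_sq W hW0 hW1)

include hW0 in
lemma weight_nonneg (k : ℕ) (z : ℕ → ℤ) : 0 ≤ weight W k z :=
  Finset.prod_nonneg fun i _ => hW0 _

lemma cube_le_one {k : ℕ} {z : ℕ → ℤ} (hz : z ∈ cube k) : ∀ i, z i ≤ 1 := by
  intro i
  rcases mem_cube.mp hz with ⟨h1, h2⟩
  by_cases hi : i < k
  · have h3 := h1 i hi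
    simp only [letters, Finset.mem_insert, Finset.mem_singleton] at h3
    rcases h3 with h | h | h <;> omega
  · rw [h2 i (Nat.not_lt.mp hi)]; omega

/-- `j` is a strict record time for the path `z`. -/
def recAt (z : ℕ → ℤ) (j : ℕ) : Prop := ∀ i, i < j → Tz z i < Tz z j

/-- All partial sums up to time `k` are positive. -/
def posPred (k : ℕ) (z : ℕ → ℤ) : Prop := ∀ i, 1 ≤ i → i ≤ k → 0 < Tz z i

/-- All partial sums up to time `k` are nonnegative. -/
def nonnegPred (k : ℕ) (z : ℕ → ℤ) : Prop := ∀ j, j ≤ k → 0 ≤ Tz z j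

lemma records_count (z : ℕ → ℤ) (hz : ∀ i, z i ≤ 1) (k : ℕ) :
    ∀ j, j ≤ k → Tz z j ≤ (((Finset.Icc 1 k).filter (recAt z)).card : ℤ) := by
  induction k with
  | zero =>
    intro j hj
    interval_cases j
    simp [Tz]
  | succ k ih =>
    have hsub : ((Finset.Icc 1 k).filter (recAt z)).card
        ≤ ((Finset.Icc 1 (k+1)).filter (recAt z)).card := by
      apply Finset.card_le_card
      apply Finset.filter_subset_filter
      intro i hi
      simp only [Finset.mem_Icc] at hi ⊢
      omega
    intro j hj
    rcases Nat.lt_or_ge j (k+1) with h | h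
    · exact le_trans (ih j (by omega)) (by exact_mod_cast hsub)
    · have hj1 : j = k + 1 := by omega
      subst hj1
      by_cases hrec : recAt z (k+1)
      · have hk1mem : (k+1) ∈ (Finset.Icc 1 (k+1)).filter (recAt z) := by
          simp [Finset.mem_filter, Finset.mem_Icc, hrec]
        have hins : insert (k+1) ((Finset.Icc 1 k).filter (recAt z))
            ⊆ (Finset.Icc 1 (k+1)).filter (recAt z) := by
          intro i hi
          rcases Finset.mem_insert.mp hi with rfl | hi
          · exact hk1mem
          · rcases Finset.mem_filter.mp hi with ⟨hi1, hi2⟩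
            simp only [Finset.mem_Icc] at hi1
            exact Finset.mem_filter.mpr ⟨by simp [Finset.mem_Icc]; omega, hi2⟩
        have hcard : ((Finset.Icc 1 k).filter (recAt z)).card + 1
            ≤ ((Finset.Icc 1 (k+1)).filter (recAt z)).card := by
          have h5 := Finset.card_le_card hins
          rwa [Finset.card_insert_of_notMem (by
            intro hmem
            have := (Finset.mem_Icc.mp (Finset.mem_of_mem_filter _ hmem)).2
            omega)] at h5
        have h6 : Tz z (k+1) = Tz z k + z k := Finset.sum_range_succ _ _
        have h7 := ih k le_rfl
        have h8 := hz k
        omega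
      · unfold recAt at hrec
        push_neg at hrec
        obtain ⟨i, hik, hTi⟩ := hrec
        calc Tz z (k+1) ≤ Tz z i := hTi
          _ ≤ _ := le_trans (ih i (by omega)) (by exact_mod_cast hsub)

/-- Time reversal of a path of length `k`. -/
def rev (k : ℕ) (z : ℕ → ℤ) : ℕ → ℤ := fun i => if i < k then z (k - 1 - i) else 0

lemma rev_mem_cube {k : ℕ} {z : ℕ → ℤ} (hz : z ∈ cube k) : rev k z ∈ cube k := by
  rcases mem_cube.mp hz with ⟨h1, h2⟩
  refine mem_cube.mpr ⟨fun i hi => ?_, fun i hi => ?_⟩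
  · simp only [rev, if_pos hi]
    exact h1 _ (by omega)
  · simp [rev, Nat.not_lt.mpr hi]

lemma rev_rev {k : ℕ} {z : ℕ → ℤ} (hz : z ∈ cube k) : rev k (rev k z) = z := by
  rcases mem_cube.mp hz with ⟨h1, h2⟩
  funext i
  by_cases hi : i < k
  · have h2' : k - 1 - i < k := by omega
    simp only [rev, if_pos hi, if_pos h2']
    congr 1
    omega
  · simp [rev, hi, h2 i (Nat.not_lt.mp hi)]

lemma weight_rev (k : ℕ) (z : ℕ → ℤ) : weight W k (rev k z) = weight W k z := by
  unfold weight
  rw [show ∏ i ∈ range k, W (rev k z i) = ∏ i ∈ range k, W (z (k - 1 - i)) from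
    Finset.prod_congr rfl fun i hi => by
      rw [show rev k z i = z (k - 1 - i) from if_pos (Finset.mem_range.mp hi)]]
  exact Finset.prod_range_reflect (fun i => W (z i)) k

lemma Tz_add (z : ℕ → ℤ) (q j : ℕ) :
    Tz z (q + j) = Tz z q + ∑ i ∈ range j, z (q + i) := Finset.sum_range_add _ _ _

lemma Tz_rev {k : ℕ} (z : ℕ → ℤ) {j : ℕ} (hj : j ≤ k) :
    Tz (rev k z) j = Tz z k - Tz z (k - j) := by
  have h1 : Tz (rev k z) j = ∑ i ∈ range j, z (k - 1 - i) := by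
    apply Finset.sum_congr rfl
    intro i hi
    have := Finset.mem_range.mp hi
    exact if_pos (by omega)
  have h2 : ∑ i ∈ range j, z (k - 1 - i) = ∑ i ∈ range j, z ((k - j) + (j - 1 - i)) := by
    apply Finset.sum_congr rfl
    intro i hi
    have := Finset.mem_range.mp hi
    congr 1
    omega
  have h3 : ∑ i ∈ range j, z ((k - j) + (j - 1 - i))
      = ∑ i ∈ range j, z ((k - j) + i) :=
    Finset.sum_range_reflect (fun i => z ((k - j) + i)) j
  have h4 := Tz_add z (k - j) j
  rw [show (k - j) + j = k by omega] at h4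
  rw [h1, h2, h3]
  omega

lemma sum_rev_eq (k : ℕ) :
    ∑ z ∈ (cube k).filter (fun z => recAt z k), weight W k z
      = ∑ z ∈ (cube k).filter (fun z => posPred k z), weight W k z := by
  apply Finset.sum_nbij' (fun z => rev k z) (fun z => rev k z)
  · intro z hz
    rcases Finset.mem_filter.mp hz with ⟨hz1, hz2⟩
    refine Finset.mem_filter.mpr ⟨rev_mem_cube hz1, ?_⟩
    intro i h1i hik
    rw [Tz_rev z hik]
    have := hz2 (k - i) (by omega)
    omega
  · intro z hz
    rcases Finset.mem_filter.mp hz with ⟨hz1, hz2⟩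
    refine Finset.mem_filter.mpr ⟨rev_mem_cube hz1, ?_⟩
    intro i hik
    have h1 : Tz (rev k z) i = Tz z k - Tz z (k - i) := Tz_rev z (by omega)
    have h2 : Tz (rev k z) k = Tz z k - Tz z (k - k) := Tz_rev z le_rfl
    have h3 : Tz z (k - k) = 0 := by simp [Tz]
    have h4 := hz2 (k - i) (by omega) (by omega)
    omega
  · intro z hz; exact rev_rev (Finset.mem_filter.mp hz).1
  · intro z hz; exact rev_rev (Finset.mem_filter.mp hz).1
  · intro z hz; exact (weight_rev W k z).symm

include hW0 hW1 in
lemma ladder_sum (K : ℕ) :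
    drift W * K ≤ ∑ j ∈ Finset.Icc 1 K,
      ∑ z ∈ (cube K).filter (fun z => recAt z j), weight W K z := by
  have hswap : ∑ j ∈ Finset.Icc 1 K, ∑ z ∈ (cube K).filter (fun z => recAt z j), weight W K z
      = ∑ z ∈ cube K, weight W K z
          * (((Finset.Icc 1 K).filter (recAt z)).card : ℝ) := by
    calc ∑ j ∈ Finset.Icc 1 K, ∑ z ∈ (cube K).filter (fun z => recAt z j), weight W K z
        = ∑ j ∈ Finset.Icc 1 K, ∑ z ∈ cube K,
            if recAt z j then weight W K z else 0 := by
          apply Finset.sum_congr rfl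
          intro j _
          rw [Finset.sum_filter]
      _ = ∑ z ∈ cube K, ∑ j ∈ Finset.Icc 1 K,
            if recAt z j then weight W K z else 0 := Finset.sum_comm
      _ = ∑ z ∈ cube K, weight W K z
            * (((Finset.Icc 1 K).filter (recAt z)).card : ℝ) := by
          apply Finset.sum_congr rfl
          intro z _
          rw [← Finset.sum_filter, Finset.sum_const, nsmul_eq_mul, mul_comm]
  rw [hswap]
  have hperz : ∀ z ∈ cube K, weight W K z * ((Tz z K : ℤ) : ℝ)
      ≤ weight W K z * (((Finset.Icc 1 K).filter (recAt z)).card : ℝ) := by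
    intro z hz
    apply mul_le_mul_of_nonneg_left _ (weight_nonneg W hW0 K z)
    exact_mod_cast records_count z (cube_le_one hz) K K le_rfl
  calc drift W * K = ∑ z ∈ cube K, weight W K z * ((Tz z K : ℤ) : ℝ) :=
        (mean W hW1 K).symm
    _ ≤ _ := Finset.sum_le_sum hperz

include hW0 hW1 in
lemma variance_total (k : ℕ) :
    ∑ z ∈ cube k, weight W k z * ((Tz z k : ℝ) - drift W * k)^2 ≤ 4 * k := by
  have expand : ∀ z : ℕ → ℤ, ((Tz z k : ℝ) - drift W * k)
      = ∑ j ∈ range k, ((z j : ℝ) - drift W) := by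
    intro z
    rw [Finset.sum_sub_distrib, Finset.sum_const, nsmul_eq_mul, Finset.card_range]
    unfold Tz
    push_cast
    ring
  have expand2 : ∀ z : ℕ → ℤ, ((Tz z k : ℝ) - drift W * k)^2
      = ∑ j ∈ range k, ∑ j' ∈ range k, ((z j : ℝ) - drift W) * ((z j' : ℝ) - drift W) := by
    intro z
    rw [sq, expand z, Finset.sum_mul_sum]
  calc ∑ z ∈ cube k, weight W k z * ((Tz z k : ℝ) - drift W * k)^2
      = ∑ z ∈ cube k, ∑ j ∈ range k, ∑ j' ∈ range k,
          weight W k z * (((z j : ℝ) - drift W) * ((z j' : ℝ) - drift W)) := by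
        apply Finset.sum_congr rfl
        intro z _
        rw [expand2 z, Finset.mul_sum]
        apply Finset.sum_congr rfl
        intro j _
        rw [Finset.mul_sum]
    _ = ∑ j ∈ range k, ∑ z ∈ cube k, ∑ j' ∈ range k,
          weight W k z * (((z j : ℝ) - drift W) * ((z j' : ℝ) - drift W)) :=
        Finset.sum_comm
    _ = ∑ j ∈ range k, ∑ j' ∈ range k, ∑ z ∈ cube k,
          weight W k z * (((z j : ℝ) - drift W) * ((z j' : ℝ) - drift W)) := by
        apply Finset.sum_congr rfl
        intro j _
        exact Finset.sum_comm
    _ = ∑ j ∈ range k, ∑ z ∈ cube k, weight W k z * ((z j : ℝ) - drift W)^2 := by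
        apply Finset.sum_congr rfl
        intro j hj
        rw [Finset.sum_eq_single j
          (fun j' hj' hne => covariance W hW0 hW1 k j j' (Finset.mem_range.mp hj)
            (Finset.mem_range.mp hj') (Ne.symm hne))
          (fun h => absurd hj h)]
        apply Finset.sum_congr rfl
        intro z _
        ring
    _ ≤ ∑ j ∈ range k, 4 :=
        Finset.sum_le_sum fun j hj =>
          variance_diag W hW0 hW1 k j (Finset.mem_range.mp hj)
    _ = 4 * k := by simp [mul_comm]

include hW0 hW1 in
lemma cheb_sum (k : ℕ) (C : ℤ) (hC : (C:ℝ) < drift W * k) :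
    ∑ z ∈ (cube k).filter (fun z => Tz z k ≤ C), weight W k z
      ≤ 4 * k / (drift W * k - C)^2 := by
  set D := drift W * k - (C:ℝ) with hD
  have hD0 : 0 < D := by simp [hD]; linarith
  have hsq : 0 < D^2 := by positivity
  rw [div_eq_inv_mul, ← mul_le_mul_iff_right₀ hsq, ← mul_assoc, mul_inv_cancel₀ (ne_of_gt hsq),
    one_mul]
  calc D^2 * ∑ z ∈ (cube k).filter (fun z => Tz z k ≤ C), weight W k z
      = ∑ z ∈ (cube k).filter (fun z => Tz z k ≤ C), weight W k z * D^2 := by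
        rw [Finset.mul_sum]
        apply Finset.sum_congr rfl
        intro z _
        ring
    _ ≤ ∑ z ∈ (cube k).filter (fun z => Tz z k ≤ C),
          weight W k z * ((Tz z k : ℝ) - drift W * k)^2 := by
        apply Finset.sum_le_sum
        intro z hz
        have hzC : Tz z k ≤ C := (Finset.mem_filter.mp hz).2
        apply mul_le_mul_of_nonneg_left _ (weight_nonneg W hW0 k z)
        have h1 : ((Tz z k : ℝ)) ≤ C := by exact_mod_cast hzC
        have h2 : (Tz z k : ℝ) - drift W * k ≤ -D := by simp [hD]; linarith
        nlinarith [sq_nonneg ((Tz z k : ℝ) - drift W * k + D)]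
    _ ≤ ∑ z ∈ cube k, weight W k z * ((Tz z k : ℝ) - drift W * k)^2 := by
        apply Finset.sum_le_sum_of_subset_of_nonneg (Finset.filter_subset _ _)
        intro z hz _
        have := weight_nonneg W hW0 k z
        positivity
    _ ≤ 4 * k := variance_total W hW0 hW1 k

end Comb


section Prob

variable (m n : ℤ)
variable {Ω : Type*} [MeasurableSpace Ω] (P : Measure Ω) [IsProbabilityMeasure P]
variable (μ : Measure (BS m n)) [IsProbabilityMeasure μ]
variable (G : ℕ → Ω → BS m n) (hmeas : ∀ i, Measurable (G i))
variable (hindep : iIndepFun G P)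
variable (hdist : ∀ i, Measure.map (G i) P = μ)

/-- The step distribution on `ℤ` induced by `eps`. -/
noncomputable def w (z : ℤ) : ℝ≥0∞ := μ (eps m n ⁻¹' {z})

/-- The real-valued step distribution. -/
noncomputable def wR (z : ℤ) : ℝ := (w m n μ z).toReal

lemma eps_mem_letters (g : BS m n) : eps m n g ∈ letters := by
  unfold eps letters
  split_ifs <;> simp

lemma measurableSet_BS (s : Set (BS m n)) : MeasurableSet s :=
  MeasurableSpace.measurableSet_top

lemma event_eq_biUnion (k : ℕ) (Q : (ℕ → ℤ) → Prop)
    (hQ : ∀ z z', (∀ i, i < k → z i = z' i) → Q z → Q z') :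
    {ω | Q (fun i => eps m n (G i ω))}
      = ⋃ z ∈ (cube k).filter Q, {ω | ∀ i, i < k → eps m n (G i ω) = z i} := by
  ext ω
  simp only [Set.mem_setOf_eq, Set.mem_iUnion, exists_prop]
  constructor
  · intro hω
    refine ⟨fun i => if i < k then eps m n (G i ω) else 0, ?_, ?_⟩
    · refine Finset.mem_filter.mpr ⟨mem_cube.mpr ⟨fun i hi => ?_, fun i hi => ?_⟩, ?_⟩
      · rw [if_pos hi]; exact eps_mem_letters m n _
      · rw [if_neg (Nat.not_lt.mpr hi)]
      · exact hQ _ _ (fun i hi => (if_pos hi).symm) hω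
    · intro i hi; exact (if_pos hi).symm
  · rintro ⟨z, hz, hωz⟩
    exact hQ z _ (fun i hi => (hωz i hi).symm) (Finset.mem_filter.mp hz).2

include hmeas in
lemma fiber_measurable (k : ℕ) (z : ℕ → ℤ) :
    MeasurableSet {ω | ∀ i, i < k → eps m n (G i ω) = z i} := by
  have hAzdef : {ω | ∀ i, i < k → eps m n (G i ω) = z i}
      = ⋂ i ∈ Finset.range k, (G i) ⁻¹' (eps m n ⁻¹' {z i}) := by
    ext ω; simp [Set.mem_iInter]
  rw [hAzdef]
  exact Finset.measurableSet_biInter _ fun i _ => (hmeas i) (measurableSet_BS m n _)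

include hmeas in
lemma event_measurable (k : ℕ) (Q : (ℕ → ℤ) → Prop)
    (hQ : ∀ z z', (∀ i, i < k → z i = z' i) → Q z → Q z') :
    MeasurableSet {ω | Q (fun i => eps m n (G i ω))} := by
  rw [event_eq_biUnion m n G k Q hQ]
  exact Finset.measurableSet_biUnion _ fun z _ => fiber_measurable m n G hmeas k z

include hmeas hindep hdist in
lemma master (k : ℕ) (Q : (ℕ → ℤ) → Prop)
    (hQ : ∀ z z', (∀ i, i < k → z i = z' i) → Q z → Q z') :
    P {ω | Q (fun i => eps m n (G i ω))}
      = ∑ z ∈ (cube k).filter Q, ∏ i ∈ Finset.range k, w m n μ (z i) := by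
  have hAzdef : ∀ z : ℕ → ℤ, {ω | ∀ i, i < k → eps m n (G i ω) = z i}
      = ⋂ i ∈ Finset.range k, (G i) ⁻¹' (eps m n ⁻¹' {z i}) := by
    intro z; ext ω; simp [Set.mem_iInter]
  rw [event_eq_biUnion m n G k Q hQ, measure_biUnion_finset ?disj
    (fun z _ => fiber_measurable m n G hmeas k z)]
  case disj =>
    intro z hz z' hz' hne
    apply Set.disjoint_left.mpr
    intro ω hω hω'
    apply hne
    have hzc := mem_cube.mp (Finset.mem_of_mem_filter _ (Finset.mem_coe.mp hz))
    have hzc' := mem_cube.mp (Finset.mem_of_mem_filter _ (Finset.mem_coe.mp hz'))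
    funext i
    by_cases hi : i < k
    · exact (hω i hi).symm.trans (hω' i hi)
    · rw [hzc.2 i (Nat.not_lt.mp hi), hzc'.2 i (Nat.not_lt.mp hi)]
  apply Finset.sum_congr rfl
  intro z hz
  rw [hAzdef]
  rw [(iIndepFun_iff_measure_inter_preimage_eq_mul.mp hindep) (Finset.range k)
    (fun i _ => measurableSet_BS m n _)]
  apply Finset.prod_congr rfl
  intro i _
  have hwi : w m n μ (z i) = P (G i ⁻¹' (eps m n ⁻¹' {z i})) := by
    unfold w
    rw [← hdist i, Measure.map_apply (hmeas i) (measurableSet_BS m n _)]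
  rw [hwi]

include hmeas hindep hdist in
lemma masterR (k : ℕ) (Q : (ℕ → ℤ) → Prop)
    (hQ : ∀ z z', (∀ i, i < k → z i = z' i) → Q z → Q z') :
    (P {ω | Q (fun i => eps m n (G i ω))}).toReal
      = ∑ z ∈ (cube k).filter Q, weight (wR m n μ) k z := by
  rw [master m n P μ G hmeas hindep hdist k Q hQ]
  rw [ENNReal.toReal_sum (fun z _ => ?_)]
  · apply Finset.sum_congr rfl
    intro z _
    rw [ENNReal.toReal_prod]
    rfl
  · exact (ENNReal.prod_lt_top (fun i _ => measure_lt_top μ _)).ne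

lemma w_letters_sum : ∑ z ∈ letters, w m n μ z = 1 := by
  have hun : (eps m n ⁻¹' {-1}) ∪ ((eps m n ⁻¹' {0}) ∪ (eps m n ⁻¹' {1})) = Set.univ := by
    ext g
    simp only [Set.mem_union, Set.mem_preimage, Set.mem_singleton_iff, Set.mem_univ, iff_true]
    have := eps_mem_letters m n g
    unfold letters at this
    simp only [Finset.mem_insert, Finset.mem_singleton] at this
    tauto
  have hd1 : Disjoint (eps m n ⁻¹' {0}) (eps m n ⁻¹' {1}) := by
    apply Set.disjoint_left.mpr
    intro g h1 h2
    simp only [Set.mem_preimage, Set.mem_singleton_iff] at h1 h2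
    omega
  have hd2 : Disjoint (eps m n ⁻¹' {-1}) ((eps m n ⁻¹' {0}) ∪ (eps m n ⁻¹' {1})) := by
    apply Set.disjoint_left.mpr
    intro g h1 h2
    simp only [Set.mem_union, Set.mem_preimage, Set.mem_singleton_iff] at h1 h2
    omega
  have : w m n μ (-1) + (w m n μ 0 + w m n μ 1) = 1 := by
    unfold w
    rw [← measure_union hd1 (measurableSet_BS m n _), ← measure_union hd2
      (measurableSet_BS m n _), hun, measure_univ]
  rw [show (letters : Finset ℤ) = insert (-1 : ℤ) (insert 0 {1}) from rfl,
    Finset.sum_insert (by norm_num), Finset.sum_insert (by norm_num), Finset.sum_singleton]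
  exact this

lemma wR_nonneg : ∀ z, 0 ≤ wR m n μ z := fun z => ENNReal.toReal_nonneg

lemma wR_letters_sum : ∑ z ∈ letters, wR m n μ z = 1 := by
  unfold wR
  rw [← ENNReal.toReal_sum (s := letters) (f := w m n μ)
    (fun z _ => (measure_lt_top μ _).ne), w_letters_sum m n μ]
  simp

/-- Stability of `Tz` under agreement of prefixes. -/
lemma Tz_congr {z z' : ℕ → ℤ} {j : ℕ} (h : ∀ i, i < j → z i = z' i) : Tz z j = Tz z' j :=
  Finset.sum_congr rfl fun i hi => h i (Finset.mem_range.mp hi)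

lemma recAt_stable (j k : ℕ) (hjk : j ≤ k) :
    ∀ z z' : ℕ → ℤ, (∀ i, i < k → z i = z' i) → recAt z j → recAt z' j := by
  intro z z' hzz hz i hij
  have h1 : Tz z i = Tz z' i := Tz_congr (fun l hl => hzz l (by omega))
  have h2 : Tz z j = Tz z' j := Tz_congr (fun l hl => hzz l (by omega))
  rw [← h1, ← h2]
  exact hz i hij

lemma posPred_stable (k : ℕ) :
    ∀ z z' : ℕ → ℤ, (∀ i, i < k → z i = z' i) → posPred k z → posPred k z' := by
  intro z z' hzz hz i h1 h2
  rw [← Tz_congr (fun l hl => hzz l (by omega))]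
  exact hz i h1 h2

lemma nonnegPred_stable (k : ℕ) :
    ∀ z z' : ℕ → ℤ, (∀ i, i < k → z i = z' i) → nonnegPred k z → nonnegPred k z' := by
  intro z z' hzz hz i h1
  rw [← Tz_congr (fun l hl => hzz l (by omega))]
  exact hz i h1

include hmeas hindep hdist in
lemma rec_eq_pos (j : ℕ) :
    (P {ω | recAt (fun i => eps m n (G i ω)) j}).toReal
      = (P {ω | posPred j (fun i => eps m n (G i ω))}).toReal := by
  rw [masterR m n P μ G hmeas hindep hdist j _ (recAt_stable j j le_rfl),
    masterR m n P μ G hmeas hindep hdist j _ (posPred_stable j),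
    sum_rev_eq (wR m n μ) j]

include hmeas hindep hdist in
lemma pos_prob_ge (k : ℕ) :
    drift (wR m n μ)
      ≤ (P {ω | nonnegPred k (fun i => eps m n (G i ω))}).toReal := by
  set W := wR m n μ with hWdef
  have hW0 := wR_nonneg m n μ
  have hW1 := wR_letters_sum m n μ
  set sk := (P {ω | posPred k (fun i => eps m n (G i ω))}).toReal with hsk
  have hmono : ∀ j, k ≤ j →
      (P {ω | posPred j (fun i => eps m n (G i ω))}).toReal ≤ sk := by
    intro j hj
    apply ENNReal.toReal_mono (measure_ne_top P _)
    apply measure_mono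
    intro ω hω
    intro i h1 h2
    exact hω i h1 (by omega)
  have hle1 : ∀ j : ℕ, (P {ω | posPred j (fun i => eps m n (G i ω))}).toReal ≤ 1 := by
    intro j
    rw [show (1:ℝ) = (1 : ℝ≥0∞).toReal by simp]
    exact ENNReal.toReal_mono (by simp) prob_le_one
  have hKb : ∀ K : ℕ, drift W * K ≤ k + K * sk := by
    intro K
    have hlad := ladder_sum W hW0 hW1 K
    have hsum_eq : ∀ j ∈ Finset.Icc 1 K,
        ∑ z ∈ (cube K).filter (fun z => recAt z j), weight W K z
          = (P {ω | posPred j (fun i => eps m n (G i ω))}).toReal := by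
      intro j hj
      have hjK := (Finset.mem_Icc.mp hj).2
      rw [← masterR m n P μ G hmeas hindep hdist K _ (recAt_stable j K hjK)]
      rw [show (P {ω | recAt (fun i => eps m n (G i ω)) j})
          = (P {ω | recAt (fun i => eps m n (G i ω)) j}) from rfl]
      exact rec_eq_pos m n P μ G hmeas hindep hdist j
    rw [Finset.sum_congr rfl hsum_eq] at hlad
    set f : ℕ → ℝ := fun j => (P {ω | posPred j (fun i => eps m n (G i ω))}).toReal with hf
    have hsplit := Finset.sum_filter_add_sum_filter_not (Finset.Icc 1 K) (fun j => j ≤ k) f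
    have hb1 : ∑ j ∈ (Finset.Icc 1 K).filter (fun j => j ≤ k), f j ≤ k := by
      calc ∑ j ∈ (Finset.Icc 1 K).filter (fun j => j ≤ k), f j
          ≤ ∑ j ∈ (Finset.Icc 1 K).filter (fun j => j ≤ k), 1 :=
            Finset.sum_le_sum fun j _ => hle1 j
        _ = ((Finset.Icc 1 K).filter (fun j => j ≤ k)).card := by simp
        _ ≤ (Finset.Icc 1 k).card := by
            apply Nat.cast_le.mpr
            apply Finset.card_le_card
            intro j hj
            rcases Finset.mem_filter.mp hj with ⟨h1, h2⟩
            simp only [Finset.mem_Icc] at h1 ⊢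
            omega
        _ ≤ k := by rw [Nat.card_Icc]; simp
    have hb2 : ∑ j ∈ (Finset.Icc 1 K).filter (fun j => ¬ j ≤ k), f j ≤ K * sk := by
      calc ∑ j ∈ (Finset.Icc 1 K).filter (fun j => ¬ j ≤ k), f j
          ≤ ∑ j ∈ (Finset.Icc 1 K).filter (fun j => ¬ j ≤ k), sk := by
            apply Finset.sum_le_sum
            intro j hj
            rcases Finset.mem_filter.mp hj with ⟨h1, h2⟩
            exact hmono j (by omega)
        _ = ((Finset.Icc 1 K).filter (fun j => ¬ j ≤ k)).card * sk := by
            rw [Finset.sum_const, nsmul_eq_mul]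
        _ ≤ K * sk := by
            apply mul_le_mul_of_nonneg_right _ ?_
            · apply Nat.cast_le.mpr
              calc ((Finset.Icc 1 K).filter (fun j => ¬ j ≤ k)).card
                  ≤ (Finset.Icc 1 K).card := Finset.card_le_card (Finset.filter_subset _ _)
                _ ≤ K := by rw [Nat.card_Icc]; simp
            · rw [hsk]; exact ENNReal.toReal_nonneg
    calc drift W * K ≤ ∑ j ∈ Finset.Icc 1 K, f j := hlad
      _ = _ + _ := hsplit.symm
      _ ≤ k + K * sk := add_le_add hb1 hb2
  have hlim : drift W ≤ sk := by
    have hev : ∀ᶠ (K : ℕ) in Filter.atTop, drift W - (k:ℝ) / K ≤ sk := by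
      filter_upwards [Filter.eventually_ge_atTop 1] with K hK
      have hK0 : (0:ℝ) < K := by exact_mod_cast hK
      have h1 := hKb K
      have h2 : (drift W - sk) * K ≤ k := by nlinarith
      have h3 : drift W - sk ≤ (k:ℝ) / K := by
        rw [le_div_iff₀ hK0]; linarith
      linarith
    have htend : Filter.Tendsto (fun K : ℕ => drift W - (k:ℝ) / K) Filter.atTop
        (nhds (drift W - 0)) :=
      Filter.Tendsto.sub tendsto_const_nhds (tendsto_const_div_atTop_nhds_zero_nat (k:ℝ))
    rw [sub_zero] at htend
    exact le_of_tendsto htend hev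
  refine le_trans hlim ?_
  apply ENNReal.toReal_mono (measure_ne_top P _)
  apply measure_mono
  intro ω hω j hj
  rcases Nat.eq_zero_or_pos j with rfl | hj0
  · simp [Tz]
  · exact le_of_lt (hω j hj0 hj)

include hmeas hindep hdist in
lemma cheb_prob (C : ℤ) (k : ℕ) (hk : (C:ℝ) < drift (wR m n μ) * k) :
    (P {ω | Tz (fun i => eps m n (G i ω)) k ≤ C}).toReal
      ≤ 4 * k / (drift (wR m n μ) * k - C)^2 := by
  have hstab : ∀ z z' : ℕ → ℤ, (∀ i, i < k → z i = z' i) → Tz z k ≤ C → Tz z' k ≤ C := by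
    intro z z' hzz hz
    rw [← Tz_congr hzz]
    exact hz
  rw [masterR m n P μ G hmeas hindep hdist k _ hstab]
  have hc := cheb_sum (wR m n μ) (wR_nonneg m n μ) (wR_letters_sum m n μ) k C hk
  have hfil : (@Finset.filter (ℕ → ℤ) (fun z => Tz z k ≤ C)
        (fun a => Classical.propDecidable (Tz a k ≤ C)) (cube k))
      = (@Finset.filter (ℕ → ℤ) (fun z => Tz z k ≤ C) (fun a => (Tz a k).decLe C) (cube k)) := by
    ext z
    simp only [Finset.mem_filter]
  rw [hfil]
  exact hc

end Prob

end BSaux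

end BSaux

end BSaux

open BSaux BSaux.BSaux BSaux.BSaux.BSaux

/-- In the setting of Statement 6, the probability that
`S_k⁻¹ U_N S_k ∩ U_M ≠ ∅` (i.e. that some `Λ` with `Λ ∩ ⟨b⟩ = ⟨b^N⟩` has
`S_k⁻¹ Λ S_k ∩ ⟨b⟩ = ⟨b^M⟩`) has `limsup ≤ 1 - (μ(t) - μ(t⁻¹))`; in particular it
does not converge to `1`. -/
theorem not_topologically_mu_mixing
    (m n : ℤ) (h1m : 1 < m.natAbs) (h1n : 1 < n.natAbs) (hmn : m.natAbs ≠ n.natAbs)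
    (p : ℕ) (hp : p.Prime)
    (hval : padicValNat p n.natAbs < padicValNat p m.natAbs)
    (μ : Measure (BS m n)) [IsProbabilityMeasure μ]
    (hsupp : ∀ g : BS m n, μ {g} ≠ 0 ↔
      g ∈ ({BS.b m n, (BS.b m n)⁻¹, BS.t m n, (BS.t m n)⁻¹} : Set (BS m n)))
    (hμt : μ {(BS.t m n)⁻¹} < μ {BS.t m n})
    {Ω : Type*} [MeasurableSpace Ω] (P : Measure Ω) [IsProbabilityMeasure P]
    (G : ℕ → Ω → BS m n) (hmeas : ∀ i, Measurable (G i))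
    (hindep : iIndepFun G P)
    (hdist : ∀ i, Measure.map (G i) P = μ)
    (S : ℕ → Ω → BS m n)
    (hS : ∀ k ω, S k ω = ((List.range k).map (fun i => G i ω)).prod)
    (N : ℕ) (hN : 0 < N) (hNp : padicValNat p m.natAbs < padicValNat p N)
    (M : ℕ) (hM : 0 < M) :
    Filter.limsup (fun k => P {ω | ∃ Λ : Subgroup (BS m n),
        Λ ⊓ Subgroup.zpowers (BS.b m n) = Subgroup.zpowers (BS.b m n ^ N) ∧
        Subgroup.map (MulAut.conj (S k ω)⁻¹).toMonoidHom Λ ⊓ Subgroup.zpowers (BS.b m n)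
          = Subgroup.zpowers (BS.b m n ^ M)}) Filter.atTop
      ≤ 1 - (μ {BS.t m n} - μ {(BS.t m n)⁻¹}) ∧
    ¬ Filter.Tendsto (fun k => P {ω | ∃ Λ : Subgroup (BS m n),
        Λ ⊓ Subgroup.zpowers (BS.b m n) = Subgroup.zpowers (BS.b m n ^ N) ∧
        Subgroup.map (MulAut.conj (S k ω)⁻¹).toMonoidHom Λ ⊓ Subgroup.zpowers (BS.b m n)
          = Subgroup.zpowers (BS.b m n ^ M)}) Filter.atTop (nhds 1) := by
  -- notation
  set δE : ℝ≥0∞ := μ {BS.t m n} - μ {(BS.t m n)⁻¹} with hδE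
  set fourset : Set (BS m n) := {BS.b m n, (BS.b m n)⁻¹, BS.t m n, (BS.t m n)⁻¹} with hfourset
  set E : ℕ → Set Ω := fun k => {ω | ∃ Λ : Subgroup (BS m n),
        Λ ⊓ Subgroup.zpowers (BS.b m n) = Subgroup.zpowers (BS.b m n ^ N) ∧
        Subgroup.map (MulAut.conj (S k ω)⁻¹).toMonoidHom Λ ⊓ Subgroup.zpowers (BS.b m n)
          = Subgroup.zpowers (BS.b m n ^ M)} with hE
  -- basic conversions
  have hval' : n.natAbs.factorization p < m.natAbs.factorization p := by
    rw [Nat.factorization_def _ hp, Nat.factorization_def _ hp]; exact hval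
  have hNp' : m.natAbs.factorization p < N.factorization p := by
    rw [Nat.factorization_def _ hp, Nat.factorization_def _ hp]; exact hNp
  set C : ℤ := (M.factorization p : ℤ) with hC
  have htne : BS.t m n ≠ (BS.t m n)⁻¹ := by
    intro h
    have h2 := hμt
    rw [← h] at h2
    exact lt_irrefl _ h2
  -- weights
  have hw1 : w m n μ 1 = μ {BS.t m n} := by
    unfold w
    congr 1
    ext g
    simp only [Set.mem_preimage, Set.mem_singleton_iff]
    constructor
    · intro h
      unfold eps at h
      by_cases h1 : g = BS.t m n
      · exact h1
      · by_cases h2 : g = (BS.t m n)⁻¹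
        · rw [if_neg h1, if_pos h2] at h; omega
        · rw [if_neg h1, if_neg h2] at h; omega
    · intro h
      subst h
      unfold eps
      rw [if_pos rfl]
  have hwm1 : w m n μ (-1) = μ {(BS.t m n)⁻¹} := by
    unfold w
    congr 1
    ext g
    simp only [Set.mem_preimage, Set.mem_singleton_iff]
    constructor
    · intro h
      unfold eps at h
      by_cases h1 : g = BS.t m n
      · rw [if_pos h1] at h; omega
      · by_cases h2 : g = (BS.t m n)⁻¹
        · exact h2
        · rw [if_neg h1, if_neg h2] at h; omega
    · intro h
      subst h
      unfold eps
      rw [if_neg (Ne.symm htne), if_pos rfl]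
  have hδtoReal : δE.toReal = drift (wR m n μ) := by
    rw [hδE, ENNReal.toReal_sub_of_le hμt.le (measure_ne_top μ _)]
    unfold drift wR
    rw [hw1, hwm1]
  have hδpos : (0:ℝ) < drift (wR m n μ) := by
    rw [← hδtoReal, hδE]
    rw [ENNReal.toReal_sub_of_le hμt.le (measure_ne_top μ _)]
    have := (ENNReal.toReal_lt_toReal (measure_ne_top μ _) (measure_ne_top μ _)).mpr hμt
    linarith
  set δR : ℝ := drift (wR m n μ) with hδR
  -- countability of the group and nullity of the complement of the support
  have hcount : Countable (BS m n) := by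
    have h1 : Countable (FreeGroup Bool) :=
      Function.Injective.countable FreeGroup.toWord_injective
    exact Function.Surjective.countable
      (QuotientGroup.mk'_surjective (Subgroup.normalClosure (BSRels m n)))
  have hnull : μ foursetᶜ = 0 := by
    have hrep : foursetᶜ = ⋃ (x : ↥(foursetᶜ)), {(x : BS m n)} :=
      (Set.iUnion_of_singleton_coe foursetᶜ).symm
    rw [hrep]
    apply measure_iUnion_null
    intro x
    have hx : (x : BS m n) ∉ fourset := x.2
    by_contra h
    exact hx ((hsupp _).mp h)
  -- bad sets
  set B1 : Set Ω := ⋃ (i : ℕ), (G i) ⁻¹' foursetᶜ with hB1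
  set B2 : ℕ → Set Ω := fun k => {ω | nonnegPred k (fun i => eps m n (G i ω))}ᶜ with hB2
  set B3 : ℕ → Set Ω := fun k => {ω | Tz (fun i => eps m n (G i ω)) k ≤ C} with hB3
  have hB1null : P B1 = 0 := by
    apply measure_iUnion_null
    intro i
    rw [show (G i) ⁻¹' foursetᶜ = (G i) ⁻¹' foursetᶜ from rfl,
      ← Measure.map_apply (hmeas i) (measurableSet_BS m n _), hdist i]
    exact hnull
  -- inclusion
  have hincl : ∀ k, E k ⊆ B1 ∪ (B2 k ∪ B3 k) := by
    intro k ω hω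
    by_contra hnot
    simp only [Set.mem_union, not_or] at hnot
    obtain ⟨hn1', hn2, hn3⟩ := hnot
    have hx : ∀ i, i < k → G i ω ∈ fourset := by
      intro i _
      by_contra hxi
      exact hn1' (Set.mem_iUnion.mpr ⟨i, hxi⟩)
    have hT : ∀ j, j ≤ k → 0 ≤ ∑ i ∈ Finset.range j, eps m n (G i ω) := by
      have h2 : nonnegPred k (fun i => eps m n (G i ω)) := not_not.mp hn2
      intro j hj
      exact h2 j hj
    have hTk : (M.factorization p : ℤ) < ∑ i ∈ Finset.range k, eps m n (G i ω) := by
      have h3 : ¬ (Tz (fun i => eps m n (G i ω)) k ≤ C) := hn3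
      rw [not_le] at h3
      exact h3
    obtain ⟨Λ, h1, h2⟩ := hω
    rw [hS k ω] at h2
    exact det_main m n p hp h1m h1n hval' N M hN hM hNp'
      (fun i => G i ω) k hx hT hTk Λ h1 h2
  -- probability bound
  have hB2bound : ∀ k, P (B2 k) ≤ 1 - δE := by
    intro k
    rw [hB2]
    rw [prob_compl_eq_one_sub (event_measurable m n G hmeas k _ (nonnegPred_stable k))]
    apply tsub_le_tsub_left
    have h1 := pos_prob_ge m n P μ G hmeas hindep hdist k
    rw [← hδR, ← hδtoReal] at h1
    exact (ENNReal.toReal_le_toReal (by rw [hδE]; exact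
      (tsub_le_self.trans_lt (measure_lt_top μ _)).ne) (measure_ne_top P _)).mp h1
  -- Chebyshev: B3 tends to zero
  have hB3tend : Filter.Tendsto (fun k => P (B3 k)) Filter.atTop (nhds 0) := by
    have hlin : Filter.Tendsto (fun k : ℕ => δR * k) Filter.atTop Filter.atTop :=
      Filter.Tendsto.const_mul_atTop hδpos tendsto_natCast_atTop_atTop
    have hev : ∀ᶠ k : ℕ in Filter.atTop,
        P (B3 k) ≤ ENNReal.ofReal ((16 / δR^2) / k) := by
      filter_upwards [hlin.eventually_ge_atTop (2 * (C:ℝ) + 2), Filter.eventually_ge_atTop 1]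
        with k hk1 hk2
      have hk0 : (0:ℝ) < (k:ℝ) := by exact_mod_cast hk2
      have hC0 : (0:ℝ) ≤ (C:ℝ) := by rw [hC]; positivity
      have hCk : (C:ℝ) < δR * k := by
        push_cast at hk1 ⊢
        linarith
      have hcheb := cheb_prob m n P μ G hmeas hindep hdist C k hCk
      have hb : 4 * (k:ℝ) / (δR * k - C)^2 ≤ (16 / δR^2) / k := by
        have hD : δR * k - C ≥ δR * k / 2 := by
          push_cast at hk1
          linarith
        have hDpos : 0 < δR * k / 2 := by positivity
        have hsq : (δR * k / 2)^2 ≤ (δR * k - C)^2 := by nlinarith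
        have hδne : δR ≠ 0 := ne_of_gt hδpos
        have hkne : (k:ℝ) ≠ 0 := ne_of_gt hk0
        calc 4 * (k:ℝ) / (δR * k - C)^2 ≤ 4 * (k:ℝ) / (δR * k / 2)^2 := by
              apply div_le_div_of_nonneg_left (by positivity) (by positivity) hsq
          _ = (16 / δR^2) / k := by
              field_simp
              ring

      calc P (B3 k) = ENNReal.ofReal ((P (B3 k)).toReal) :=
            (ENNReal.ofReal_toReal (measure_ne_top P _)).symm
        _ ≤ ENNReal.ofReal (4 * (k:ℝ) / (δR * k - C)^2) := ENNReal.ofReal_le_ofReal hcheb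
        _ ≤ ENNReal.ofReal ((16 / δR^2) / k) := ENNReal.ofReal_le_ofReal hb
    have hzero : Filter.Tendsto (fun k : ℕ => ENNReal.ofReal ((16 / δR^2) / k))
        Filter.atTop (nhds 0) := by
      rw [show (0 : ℝ≥0∞) = ENNReal.ofReal 0 by simp]
      exact (ENNReal.continuous_ofReal.tendsto 0).comp
        (tendsto_const_div_atTop_nhds_zero_nat (16 / δR^2))
    exact tendsto_of_tendsto_of_tendsto_of_le_of_le' tendsto_const_nhds hzero
      (Filter.Eventually.of_forall fun k => zero_le) hev
  -- main limsup bound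
  have hmain : Filter.limsup (fun k => P (E k)) Filter.atTop ≤ 1 - δE := by
    have hpt : ∀ k, P (E k) ≤ (1 - δE) + P (B3 k) := by
      intro k
      calc P (E k) ≤ P (B1 ∪ (B2 k ∪ B3 k)) := measure_mono (hincl k)
        _ ≤ P B1 + P (B2 k ∪ B3 k) := measure_union_le _ _
        _ ≤ 0 + (P (B2 k) + P (B3 k)) := by
            rw [hB1null]
            exact add_le_add le_rfl (measure_union_le _ _)
        _ ≤ (1 - δE) + P (B3 k) := by
            rw [zero_add]
            exact add_le_add (hB2bound k) le_rfl
    have htendR : Filter.Tendsto (fun k => (1 - δE) + P (B3 k)) Filter.atTop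
        (nhds ((1 - δE) + 0)) := Filter.Tendsto.add tendsto_const_nhds hB3tend
    rw [add_zero] at htendR
    calc Filter.limsup (fun k => P (E k)) Filter.atTop
        ≤ Filter.limsup (fun k => (1 - δE) + P (B3 k)) Filter.atTop :=
          Filter.limsup_le_limsup (Filter.Eventually.of_forall hpt)
      _ = 1 - δE := htendR.limsup_eq
  refine ⟨hmain, ?_⟩
  intro htend
  have h1 : Filter.limsup (fun k => P (E k)) Filter.atTop = 1 := htend.limsup_eq
  rw [h1] at hmain
  have hδ0 : δE ≠ 0 := by
    rw [hδE]
    exact (tsub_pos_iff_lt.mpr hμt).ne'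
  have hlt : (1 : ℝ≥0∞) - δE < 1 :=
    ENNReal.sub_lt_self (by simp) (by simp) hδ0
  exact absurd hmain (not_le.mpr hlt)
end
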